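/- arXiv:1403.4679 — 3 statements merged into one kernel-verified Lean document; each statement's English description precedes it below -/
import Mathlib

section
/- If measurable functions U: [0,1] → ℝ and E: [0,1) → ℝ satisfy (1-q₃)·U(q₁/(1-q₃)) + E(q₃) = (1-q₁)·U(q₃/(1-q₁)) + E(q₁) for all q₁, q₃ ∈ [0,1) with q₁ + q₃ ≤ 1, then there exist constants a, b₁, b₂, d with U(y) = a·H₂(y) + b₂y + (b₁ - b₂) and E(x) = a·H₂(x) + b₁x + d. -/
open scoped BigOperators

/-- Binary Shannon entropy (natural logarithm), with `H₂ 0 = H₂ 1 = 0`. -/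
noncomputable def H2 (x : ℝ) : ℝ := -(x * Real.log x) - (1 - x) * Real.log (1 - x)

/-!
A measurable solution `F` of the fundamental equation is bounded on every `[δ, 1 - δ]`: the
equation writes `F y` through the values of `F` at `x`, `x / (1 - y)` and `y / (1 - x)`, and
since `{|F| > n}` has arbitrarily small measure, some `x ∈ (0, 1 - y)` keeps all three points
outside it. So `F` is locally integrable on `(0, 1)`. Integrating the equation over `x ∈ [α, β]`
expresses `F` near `y` through primitives of `F` and `F s / s ^ 3` evaluated at points depending
smoothly on `y`; a primitive gains one derivative, so `F` is smooth on `(0, 1)`. Differentiating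
the equation in `y` and then in `x` shows that `t (1 - t) F''(t)` is constant, hence
`F = a H₂ + b t + c` on `(0, 1)`, and the equation at two points forces `c = 0` and `F 1 = b`.
For the theorem, `U - U 0` solves the equation and `q₃ = 0` expresses `E` through `U`.
-/

open Real MeasureTheory Set Filter Topology intervalIntegral
open scoped ENNReal NNReal Interval

lemma H2_one_sub (x : ℝ) : H2 (1 - x) = H2 x := by
  unfold H2
  ring_nf

lemma H2_add_mul_H2_div_one_sub {x y : ℝ} (hx : 0 < x) (hy : 0 < y) (hxy : x + y < 1) :
    H2 x + (1 - x) * H2 (y / (1 - x)) = H2 y + (1 - y) * H2 (x / (1 - y)) := by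
  have hx1 : 1 - x ≠ 0 := by linarith
  have hy1 : 1 - y ≠ 0 := by linarith
  have hz : 1 - x - y ≠ 0 := by linarith
  have e1 : 1 - y / (1 - x) = (1 - x - y) / (1 - x) := by field_simp
  have e2 : 1 - x / (1 - y) = (1 - x - y) / (1 - y) := by field_simp; ring
  unfold H2
  rw [e1, e2, log_div hy.ne' hx1, log_div hx.ne' hy1, log_div hz hx1, log_div hz hy1]
  field_simp
  ring

lemma hasDerivAt_log_one_sub {x : ℝ} (hx : x < 1) :
    HasDerivAt (fun t => log (1 - t)) (-(1 - x)⁻¹) x := by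
  simpa [neg_div, div_eq_mul_inv] using
    ((hasDerivAt_id x).const_sub 1).log (by simp; linarith)

lemma hasDerivAt_H2 {x : ℝ} (hx : 0 < x) (hx1 : x < 1) :
    HasDerivAt H2 (log (1 - x) - log x) x := by
  have h := (((hasDerivAt_id' x).mul (hasDerivAt_log hx.ne')).neg).sub
    (((hasDerivAt_id' x).const_sub 1).mul (hasDerivAt_log_one_sub hx1))
  refine h.congr_deriv ?_
  have : 1 - x ≠ 0 := by linarith
  field_simp
  ring

lemma hasDerivAt_log_one_sub_sub_log {x : ℝ} (hx : 0 < x) (hx1 : x < 1) :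
    HasDerivAt (fun t => log (1 - t) - log t) (-(x * (1 - x))⁻¹) x := by
  refine ((hasDerivAt_log_one_sub hx1).sub (hasDerivAt_log hx.ne')).congr_deriv ?_
  have : 1 - x ≠ 0 := by linarith
  field_simp
  ring

lemma hasDerivAt_div_one_sub (c : ℝ) {x : ℝ} (hx : x ≠ 1) :
    HasDerivAt (fun t => c / (1 - t)) (c / (1 - x) ^ 2) x := by
  have : 1 - x ≠ 0 := sub_ne_zero.2 hx.symm
  refine ((hasDerivAt_const x c).div ((hasDerivAt_id' x).const_sub 1) this).congr_deriv ?_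
  ring

lemma div_one_sub_mem_Icc {x y : ℝ} (hx : x < 1) (hy : 0 ≤ y) (hxy : x + y ≤ 1) :
    y / (1 - x) ∈ Icc (0 : ℝ) 1 :=
  ⟨div_nonneg hy (by linarith), (div_le_one (by linarith)).2 (by linarith)⟩

section Primitive

variable {G : ℝ → ℝ} {a b c : ℝ}

lemma MeasureTheory.LocallyIntegrableOn.intervalIntegrable_of_mem_Ioo
    (hG : LocallyIntegrableOn G (Ioo a b)) {s t : ℝ} (hs : s ∈ Ioo a b) (ht : t ∈ Ioo a b) :
    IntervalIntegrable G volume s t :=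
  (hG.integrableOn_compact_subset (ordConnected_Ioo.uIcc_subset hs ht)
    isCompact_uIcc).intervalIntegrable

lemma continuousOn_primitive_of_locallyIntegrableOn (hG : LocallyIntegrableOn G (Ioo a b))
    (hc : c ∈ Ioo a b) : ContinuousOn (fun t => ∫ s in c..t, G s) (Ioo a b) := by
  intro t ht
  obtain ⟨b₁, hab₁, hb₁⟩ := exists_between (lt_min hc.1 ht.1)
  obtain ⟨b₂, hb₂, hb₂b⟩ := exists_between (max_lt hc.2 ht.2)
  have hc₁ : min c b₁ = b₁ := min_eq_right (hb₁.le.trans (min_le_left _ _))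
  have hc₂ : max c b₂ = b₂ := max_eq_right ((le_max_left _ _).trans hb₂.le)
  have hint : IntervalIntegrable G volume (min c b₁) (max c b₂) := by
    rw [hc₁, hc₂]
    refine hG.intervalIntegrable_of_mem_Ioo ⟨hab₁, ?_⟩ ⟨?_, hb₂b⟩
    · linarith [min_le_left c t, hc.2]
    · linarith [le_max_left c t, hc.1]
  have hnhds : Icc b₁ b₂ ∈ 𝓝 t :=
    Icc_mem_nhds (hb₁.trans_le (min_le_right _ _)) ((le_max_right _ _).trans_lt hb₂)
  exact ((continuousWithinAt_primitive (measure_singleton t) hint).continuousAt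
    hnhds).continuousWithinAt

lemma contDiffOn_primitive {n : ℕ} (hG : ContDiffOn ℝ n G (Ioo a b)) (hc : c ∈ Ioo a b) :
    ContDiffOn ℝ (n + 1) (fun t => ∫ s in c..t, G s) (Ioo a b) := by
  have hderiv : ∀ t ∈ Ioo a b, HasDerivAt (fun t => ∫ s in c..t, G s) (G t) t := fun t ht =>
    integral_hasDerivAt_right
      ((hG.continuousOn.mono (ordConnected_Ioo.uIcc_subset hc ht)).intervalIntegrable)
      (hG.continuousOn.stronglyMeasurableAtFilter isOpen_Ioo t ht)
      (hG.continuousOn.continuousAt (isOpen_Ioo.mem_nhds ht))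
  rw [contDiffOn_succ_iff_deriv_of_isOpen isOpen_Ioo]
  exact ⟨fun t ht => (hderiv t ht).differentiableAt.differentiableWithinAt, by simp,
    hG.congr fun t ht => (hderiv t ht).deriv⟩

lemma contDiffAt_integral_of_contDiffOn_primitive {m : WithTop ℕ∞} {u v : ℝ → ℝ}
    {y₀ : ℝ} (hG : LocallyIntegrableOn G (Ioo a b)) (hc : c ∈ Ioo a b)
    (hP : ContDiffOn ℝ m (fun t => ∫ s in c..t, G s) (Ioo a b))
    (hu : ContDiffAt ℝ m u y₀) (hv : ContDiffAt ℝ m v y₀)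
    (hu₀ : u y₀ ∈ Ioo a b) (hv₀ : v y₀ ∈ Ioo a b) :
    ContDiffAt ℝ m (fun y => ∫ s in u y..v y, G s) y₀ := by
  have hP' : ∀ z ∈ Ioo a b, ContDiffAt ℝ m (fun t => ∫ s in c..t, G s) z :=
    fun z hz => hP.contDiffAt (isOpen_Ioo.mem_nhds hz)
  refine (((hP' _ hv₀).comp y₀ hv).sub ((hP' _ hu₀).comp y₀ hu)).congr_of_eventuallyEq ?_
  filter_upwards [hu.continuousAt.preimage_mem_nhds (isOpen_Ioo.mem_nhds hu₀),
    hv.continuousAt.preimage_mem_nhds (isOpen_Ioo.mem_nhds hv₀)] with y huy hvy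
  exact (integral_interval_sub_left (hG.intervalIntegrable_of_mem_Ioo hc hvy)
    (hG.intervalIntegrable_of_mem_Ioo hc huy)).symm

end Primitive

lemma volume_image_le_of_lipschitzOnWith {f : ℝ → ℝ} {K : ℝ≥0} {s : Set ℝ}
    (hf : LipschitzOnWith K f s) : volume (f '' s) ≤ K * volume s := by
  simpa [hausdorffMeasure_real] using hf.hausdorffMeasure_image_le zero_le_one

lemma exists_nat_measure_setOf_lt_abs_lt {α : Type*} [MeasurableSpace α] {μ : Measure α}
    [IsFiniteMeasure μ] {f : α → ℝ} (hf : Measurable f) {ε : ℝ≥0∞} (hε : 0 < ε) :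
    ∃ n : ℕ, μ {x | (n : ℝ) < |f x|} < ε := by
  have hanti : Antitone fun n : ℕ => {x | (n : ℝ) < |f x|} :=
    fun m n hmn x (hx : (n : ℝ) < |f x|) => show (m : ℝ) < |f x| from
      (Nat.cast_le.2 hmn).trans_lt hx
  have hempty : ⋂ n : ℕ, {x | (n : ℝ) < |f x|} = ∅ := by
    refine eq_empty_of_forall_notMem fun x hx => ?_
    obtain ⟨n, hn⟩ := exists_nat_ge |f x|
    exact (mem_iInter.1 hx n).not_ge hn
  have htend := tendsto_measure_iInter_atTop (μ := μ)
    (fun n => (measurableSet_lt measurable_const hf.abs).nullMeasurableSet) hanti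
    ⟨0, measure_ne_top _ _⟩
  rw [hempty, measure_empty] at htend
  exact (htend.eventually_lt_const hε).exists

lemma exists_forall_notMem_of_volume_lt {D : Set ℝ} {y : ℝ} (hy : 0 < y) (hy1 : y < 1)
    (hD : (2 + ENNReal.ofReal y⁻¹) * volume D < ENNReal.ofReal (1 - y)) :
    ∃ x ∈ Ioo 0 (1 - y), x ∉ D ∧ x / (1 - y) ∉ D ∧ y / (1 - x) ∉ D := by
  have hlin : LipschitzOnWith 1 (fun u => (1 - y) * u) D :=
    LipschitzOnWith.of_dist_le_mul fun u _ v _ => by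
      rw [Real.dist_eq, Real.dist_eq, ← mul_sub, abs_mul, abs_of_pos (sub_pos.2 hy1),
        NNReal.coe_one, one_mul]
      nlinarith [abs_nonneg (u - v)]
  have hinv : LipschitzOnWith (Real.toNNReal y⁻¹) (fun u => 1 - y / u) (D ∩ Ioi y) :=
    LipschitzOnWith.of_dist_le_mul fun u hu v hv => by
      have hu0 : 0 < u := hy.trans hu.2
      have hv0 : 0 < v := hy.trans hv.2
      have e : 1 - y / u - (1 - y / v) = y * (u - v) / (u * v) := by field_simp; ring
      rw [Real.dist_eq, Real.dist_eq, Real.coe_toNNReal _ (inv_nonneg.2 hy.le), e, abs_div,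
        abs_mul, abs_of_pos hy, abs_of_pos (mul_pos hu0 hv0), div_le_iff₀ (mul_pos hu0 hv0)]
      have huv : y * y ≤ u * v := mul_le_mul hu.2.le hv.2.le hy.le hu0.le
      calc y * |u - v| = y⁻¹ * |u - v| * (y * y) := by field_simp
        _ ≤ y⁻¹ * |u - v| * (u * v) := by gcongr
  -- the conclusion fails at `x` only if `x ∈ D`, `x ∈ (1 - y) • D`, or `x = 1 - y / u` with
  -- `u = y / (1 - x) ∈ D ∩ (y, ∞)`
  set B := D ∪ (fun u => (1 - y) * u) '' D ∪ (fun u => 1 - y / u) '' (D ∩ Ioi y)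
  have hB : volume B ≤ (2 + ENNReal.ofReal y⁻¹) * volume D := calc
    volume B ≤ volume D + volume ((fun u => (1 - y) * u) '' D)
        + volume ((fun u => 1 - y / u) '' (D ∩ Ioi y)) :=
      (measure_union_le _ _).trans (add_le_add_left (measure_union_le _ _) _)
    _ ≤ volume D + 1 * volume D + ENNReal.ofReal y⁻¹ * volume D := by
      gcongr
      · simpa using volume_image_le_of_lipschitzOnWith hlin
      · exact (volume_image_le_of_lipschitzOnWith hinv).trans
          (by gcongr; exacts [le_rfl, inter_subset_left])
    _ = (2 + ENNReal.ofReal y⁻¹) * volume D := by ring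
  obtain ⟨x, hx, hxB⟩ := not_subset.1 fun h : Ioo 0 (1 - y) ⊆ B => by
    have := (measure_mono h).trans hB
    rw [Real.volume_Ioo, sub_zero] at this
    exact (this.trans_lt hD).false
  have h1x : 0 < 1 - x := by linarith [hx.2]
  have h1y : 1 - y ≠ 0 := by linarith
  refine ⟨x, hx, fun h => hxB (Or.inl (Or.inl h)),
    fun h => hxB (Or.inl (Or.inr ⟨x / (1 - y), h, mul_div_cancel₀ x h1y⟩)),
    fun h => hxB (Or.inr ⟨y / (1 - x), ⟨h, ?_⟩, by field_simp; ring⟩)⟩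
  rw [mem_Ioi, lt_div_iff₀ h1x]
  nlinarith [hx.1]

section ChangeOfVariables

variable {y α β : ℝ}

lemma integral_mul_comp_div_one_sub (G : ℝ → ℝ) (hy : 0 < y) (hα : α < 1) (hβ : β < 1) :
    ∫ x in α..β, (1 - x) * G (y / (1 - x))
      = y ^ 2 * ∫ s in y / (1 - α)..y / (1 - β), G s / s ^ 3 := by
  have hlt : ∀ x ∈ [[α, β]], x < 1 := fun x hx => hx.2.trans_lt (max_lt hα hβ)
  have hsubst := integral_comp_mul_deriv_of_deriv_nonneg (g := fun s => y ^ 2 * (G s / s ^ 3))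
    (fun x hx => (hasDerivAt_div_one_sub y (hlt x hx).ne).continuousAt.continuousWithinAt)
    (fun x hx => hasDerivAt_div_one_sub y (hlt x (Ioo_subset_Icc_self hx)).ne)
    (fun x _ => by positivity)
  rw [← intervalIntegral.integral_const_mul, ← hsubst]
  refine integral_congr fun x hx => ?_
  have : 1 - x ≠ 0 := (sub_pos.2 (hlt x hx)).ne'
  simp only [Function.comp_apply]
  field_simp

lemma IntervalIntegrable.mul_comp_div_one_sub {G : ℝ → ℝ} (hy : 0 < y) (hα : α < 1)
    (hβ : β < 1)
    (hG : IntervalIntegrable (fun s => G s / s ^ 3) volume (y / (1 - α)) (y / (1 - β))) :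
    IntervalIntegrable (fun x => (1 - x) * G (y / (1 - x))) volume α β := by
  have hlt : ∀ x ∈ [[α, β]], x < 1 := fun x hx => hx.2.trans_lt (max_lt hα hβ)
  have hsubst := (integrable_comp_mul_deriv_iff_of_deriv_nonneg
    (g := fun s => y ^ 2 * (G s / s ^ 3))
    (fun x hx => (hasDerivAt_div_one_sub y (hlt x hx).ne).continuousAt.continuousWithinAt)
    (fun x hx => hasDerivAt_div_one_sub y (hlt x (Ioo_subset_Icc_self hx)).ne)
    (fun x _ => by positivity)).2 (hG.const_mul _)
  refine hsubst.congr_uIoo fun x hx => ?_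
  have : 1 - x ≠ 0 := (sub_pos.2 (hlt x (Ioo_subset_Icc_self hx))).ne'
  simp only [Function.comp_apply]
  field_simp

end ChangeOfVariables

lemma exists_eq_H2_add_of_hasDerivAt {F F₁ F₂ : ℝ → ℝ} {k : ℝ}
    (hd1 : ∀ t ∈ Ioo (0 : ℝ) 1, HasDerivAt F (F₁ t) t)
    (hd2 : ∀ t ∈ Ioo (0 : ℝ) 1, HasDerivAt F₁ (F₂ t) t)
    (hk : ∀ t ∈ Ioo (0 : ℝ) 1, t * (1 - t) * F₂ t = k) :
    ∃ b c : ℝ, ∀ t ∈ Ioo (0 : ℝ) 1, F t = -k * H2 t + b * t + c := by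
  have hlog : ∀ t ∈ Ioo (0 : ℝ) 1,
      HasDerivAt (fun t => -k * (log (1 - t) - log t)) (k * (t * (1 - t))⁻¹) t := fun t ht =>
    ((hasDerivAt_log_one_sub_sub_log ht.1 ht.2).const_mul (-k)).congr_deriv (by ring)
  obtain ⟨b, hb⟩ := isOpen_Ioo.exists_eq_add_of_deriv_eq isPreconnected_Ioo
    (fun t ht => (hd2 t ht).differentiableAt.differentiableWithinAt)
    (fun t ht => (hlog t ht).differentiableAt.differentiableWithinAt)
    fun t ht => by
      have : t * (1 - t) ≠ 0 := (mul_pos ht.1 (sub_pos.2 ht.2)).ne'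
      rw [(hd2 t ht).deriv, (hlog t ht).deriv, ← hk t ht]
      exact (eq_mul_inv_iff_mul_eq₀ this).2 (by ring)
  have hH2 : ∀ t ∈ Ioo (0 : ℝ) 1,
      HasDerivAt (fun t => -k * H2 t + b * t) (-k * (log (1 - t) - log t) + b) t := fun t ht =>
    (((hasDerivAt_H2 ht.1 ht.2).const_mul (-k)).add ((hasDerivAt_id' t).const_mul b)).congr_deriv
      (by ring)
  obtain ⟨c, hc⟩ := isOpen_Ioo.exists_eq_add_of_deriv_eq isPreconnected_Ioo
    (fun t ht => (hd1 t ht).differentiableAt.differentiableWithinAt)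
    (fun t ht => (hH2 t ht).differentiableAt.differentiableWithinAt)
    fun t ht => by rw [(hd1 t ht).deriv, (hH2 t ht).deriv, hb ht]
  exact ⟨b, c, fun t ht => hc ht⟩

def SolvesFundamentalEquation (F : ℝ → ℝ) : Prop :=
  ∀ x y : ℝ, 0 ≤ x → x < 1 → 0 ≤ y → y < 1 → x + y ≤ 1 →
    F x + (1 - x) * F (y / (1 - x)) = F y + (1 - y) * F (x / (1 - y))

namespace SolvesFundamentalEquation

variable {F F₁ F₂ : ℝ → ℝ}

theorem exists_forall_mem_Icc_abs_le (hfe : SolvesFundamentalEquation F) (hF : Measurable F)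
    {δ : ℝ} (hδ : 0 < δ) : ∃ M, ∀ y ∈ Icc δ (1 - δ), |F y| ≤ M := by
  obtain ⟨n, hn⟩ := exists_nat_measure_setOf_lt_abs_lt (μ := volume.restrict (Ioo 0 1)) hF
    (ENNReal.ofReal_pos.2 (by positivity : 0 < δ ^ 2 / 4))
  rw [Measure.restrict_apply (measurableSet_lt measurable_const hF.abs)] at hn
  set D := {t | (n : ℝ) < |F t|} ∩ Ioo 0 1
  have hgood : ∀ t ∈ Ioo (0 : ℝ) 1, t ∉ D → |F t| ≤ n := fun t ht htD =>
    not_lt.1 fun h => htD ⟨h, ht⟩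
  refine ⟨3 * n, fun y hy => ?_⟩
  have hy0 : 0 < y := hδ.trans_le hy.1
  have hy1 : y < 1 := by linarith [hy.2]
  have hD : (2 + ENNReal.ofReal y⁻¹) * volume D < ENNReal.ofReal (1 - y) := calc
    (2 + ENNReal.ofReal y⁻¹) * volume D
        ≤ ENNReal.ofReal (2 + δ⁻¹) * ENNReal.ofReal (δ ^ 2 / 4) := by
      rw [ENNReal.ofReal_add (by norm_num) (by positivity), ENNReal.ofReal_ofNat]
      gcongr
      exact hy.1
    _ = ENNReal.ofReal ((2 + δ⁻¹) * (δ ^ 2 / 4)) := (ENNReal.ofReal_mul (by positivity)).symm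
    _ < ENNReal.ofReal (1 - y) := by
      rw [ENNReal.ofReal_lt_ofReal_iff (by linarith)]
      have e : (2 + δ⁻¹) * (δ ^ 2 / 4) = δ ^ 2 / 2 + δ / 4 := by field_simp; ring
      nlinarith [hy.1, hy.2]
  obtain ⟨x, ⟨hx0, hx1⟩, hxD, hvD, huD⟩ := exists_forall_notMem_of_volume_lt hy0 hy1 hD
  have h1x : 0 < 1 - x := by linarith
  have h1y : 0 < 1 - y := by linarith
  have bx := abs_le.1 (hgood x ⟨hx0, by linarith⟩ hxD)
  have bv := abs_le.1 (hgood (x / (1 - y)) ⟨by positivity, (div_lt_one h1y).2 hx1⟩ hvD)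
  have bu := abs_le.1
    (hgood (y / (1 - x)) ⟨by positivity, (div_lt_one h1x).2 (by linarith)⟩ huD)
  have heq := hfe x y hx0.le (by linarith) hy0.le hy1 (by linarith)
  rw [abs_le]
  constructor <;> nlinarith

theorem locallyIntegrableOn (hfe : SolvesFundamentalEquation F) (hF : Measurable F) :
    LocallyIntegrableOn F (Ioo 0 1) := by
  intro x hx
  have hδ : 0 < min x (1 - x) / 2 := by have := hx.1; have := hx.2; positivity
  obtain ⟨M, hM⟩ := hfe.exists_forall_mem_Icc_abs_le hF hδ
  refine ⟨_, mem_nhdsWithin_of_mem_nhds (Icc_mem_nhds ?_ ?_),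
    Measure.integrableOn_of_bounded measure_Icc_lt_top.ne hF.aestronglyMeasurable
      ((ae_restrict_iff' measurableSet_Icc).2 (Eventually.of_forall hM))⟩
  · linarith [min_le_left x (1 - x), hx.1]
  · linarith [min_le_right x (1 - x)]

theorem mul_eq_integral (hfe : SolvesFundamentalEquation F)
    (hF : LocallyIntegrableOn F (Ioo 0 1))
    (hQ : LocallyIntegrableOn (fun s => F s / s ^ 3) (Ioo 0 1))
    {α β y : ℝ} (hα : 0 < α) (hαβ : α ≤ β) (hy : 0 < y) (hyβ : y + β < 1) :
    (β - α) * F y = (∫ x in α..β, F x)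
      + y ^ 2 * (∫ s in y / (1 - α)..y / (1 - β), F s / s ^ 3)
      - (1 - y) ^ 2 * ∫ s in α / (1 - y)..β / (1 - y), F s := by
  have h1y : 0 < 1 - y := by linarith
  have hα' : α ∈ Ioo (0 : ℝ) 1 := ⟨hα, by linarith⟩
  have hβ' : β ∈ Ioo (0 : ℝ) 1 := ⟨by linarith, by linarith⟩
  have hyα : y / (1 - α) ∈ Ioo (0 : ℝ) 1 :=
    ⟨div_pos hy (by linarith), (div_lt_one (by linarith)).2 (by linarith)⟩
  have hyβ' : y / (1 - β) ∈ Ioo (0 : ℝ) 1 :=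
    ⟨div_pos hy (by linarith), (div_lt_one (by linarith)).2 (by linarith)⟩
  have hαy : α / (1 - y) ∈ Ioo (0 : ℝ) 1 :=
    ⟨by positivity, (div_lt_one h1y).2 (by linarith)⟩
  have hβy : β / (1 - y) ∈ Ioo (0 : ℝ) 1 :=
    ⟨div_pos hβ'.1 h1y, (div_lt_one h1y).2 (by linarith)⟩
  have iF := hF.intervalIntegrable_of_mem_Ioo hα' hβ'
  have iG := (hQ.intervalIntegrable_of_mem_Ioo hyα hyβ').mul_comp_div_one_sub hy hα'.2 hβ'.2
  have iH : IntervalIntegrable (fun x => F (x / (1 - y))) volume α β := by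
    simpa [div_eq_mul_inv, h1y.ne'] using
      (hF.intervalIntegrable_of_mem_Ioo hαy hβy).comp_mul_right (c := (1 - y)⁻¹)
  have key : ∫ x in α..β, (F x + (1 - x) * F (y / (1 - x)))
      = ∫ x in α..β, (F y + (1 - y) * F (x / (1 - y))) := by
    refine integral_congr fun x hx => ?_
    rw [uIcc_of_le hαβ] at hx
    exact hfe x y (by linarith [hx.1]) (by linarith [hx.2]) hy.le (by linarith)
      (by linarith [hx.2])
  rw [integral_add iF iG, integral_add intervalIntegrable_const (iH.const_mul _),
    intervalIntegral.integral_const, intervalIntegral.integral_const_mul,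
    integral_mul_comp_div_one_sub F hy hα'.2 hβ'.2,
    integral_comp_div _ h1y.ne', smul_eq_mul, smul_eq_mul] at key
  linear_combination -key

theorem contDiffOn_of_contDiffOn_primitive {m : WithTop ℕ∞}
    (hfe : SolvesFundamentalEquation F)
    (hF : LocallyIntegrableOn F (Ioo 0 1))
    (hQ : LocallyIntegrableOn (fun s => F s / s ^ 3) (Ioo 0 1))
    (hPm : ContDiffOn ℝ m (fun t => ∫ s in (1 / 2)..t, F s) (Ioo 0 1))
    (hQm : ContDiffOn ℝ m (fun t => ∫ s in (1 / 2)..t, F s / s ^ 3) (Ioo 0 1)) :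
    ContDiffOn ℝ m F (Ioo 0 1) := by
  intro y₀ ⟨hy₀, hy₀1⟩
  obtain ⟨α, β, hα, hαβ, hβ⟩ : ∃ α β : ℝ, 0 < α ∧ α < β ∧ y₀ + β < 1 :=
    ⟨(1 - y₀) / 4, (1 - y₀) / 2, by linarith, by linarith, by linarith⟩
  have hc : (1 / 2 : ℝ) ∈ Ioo 0 1 := by norm_num
  have h1y₀ : 1 - y₀ ≠ 0 := by linarith
  have hQα := contDiffAt_integral_of_contDiffOn_primitive hQ hc hQm
    (u := fun y => y / (1 - α)) (v := fun y => y / (1 - β))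
    (contDiffAt_id.div_const _) (contDiffAt_id.div_const _)
    ⟨div_pos hy₀ (by linarith), (div_lt_one (by linarith)).2 (by linarith)⟩
    ⟨div_pos hy₀ (by linarith), (div_lt_one (by linarith)).2 (by linarith)⟩
  have hPy := contDiffAt_integral_of_contDiffOn_primitive hF hc hPm
    (u := fun y => α / (1 - y)) (v := fun y => β / (1 - y))
    (contDiffAt_const.div (contDiffAt_const.sub contDiffAt_id) h1y₀)
    (contDiffAt_const.div (contDiffAt_const.sub contDiffAt_id) h1y₀)
    ⟨div_pos hα (by linarith), (div_lt_one (by linarith)).2 (by linarith)⟩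
    ⟨div_pos (by linarith) (by linarith), (div_lt_one (by linarith)).2 (by linarith)⟩
  have hR : ContDiffAt ℝ m (fun y => (β - α)⁻¹ * ((∫ x in α..β, F x)
      + y ^ 2 * (∫ s in y / (1 - α)..y / (1 - β), F s / s ^ 3)
      - (1 - y) ^ 2 * ∫ s in α / (1 - y)..β / (1 - y), F s)) y₀ := by
    fun_prop
  refine (hR.congr_of_eventuallyEq ?_).contDiffWithinAt
  filter_upwards [Ioo_mem_nhds hy₀ (show y₀ < 1 - β by linarith)] with y hy
  rw [← hfe.mul_eq_integral hF hQ hα hαβ.le hy.1 (by linarith [hy.2]),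
    inv_mul_cancel_left₀ (sub_ne_zero.2 hαβ.ne')]

theorem contDiffOn (hfe : SolvesFundamentalEquation F) (hF : Measurable F) (n : ℕ) :
    ContDiffOn ℝ n F (Ioo 0 1) := by
  have hloc := hfe.locallyIntegrableOn hF
  have hQ : LocallyIntegrableOn (fun s => F s / s ^ 3) (Ioo 0 1) := by
    simpa only [div_eq_mul_inv] using hloc.mul_continuousOn (g := fun s => (s ^ 3)⁻¹)
      ((continuousOn_pow 3).inv₀ fun s hs => pow_ne_zero 3 hs.1.ne')
      isOpen_Ioo.isLocallyClosed
  have hc : (1 / 2 : ℝ) ∈ Ioo 0 1 := by norm_num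
  induction n with
  | zero =>
    exact hfe.contDiffOn_of_contDiffOn_primitive hloc hQ
      (contDiffOn_zero.2 (continuousOn_primitive_of_locallyIntegrableOn hloc hc))
      (contDiffOn_zero.2 (continuousOn_primitive_of_locallyIntegrableOn hQ hc))
  | succ n ih =>
    have hq : ContDiffOn ℝ n (fun s => F s / s ^ 3) (Ioo 0 1) :=
      ih.div (contDiffOn_id.pow 3) fun s hs => pow_ne_zero 3 hs.1.ne'
    exact_mod_cast hfe.contDiffOn_of_contDiffOn_primitive hloc hQ
      (contDiffOn_primitive ih hc) (contDiffOn_primitive hq hc)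

/-- The fundamental equation differentiated in `y`. -/
theorem first_derivative_eq (hfe : SolvesFundamentalEquation F)
    (hd1 : ∀ t ∈ Ioo (0 : ℝ) 1, HasDerivAt F (F₁ t) t) {x y : ℝ} (hx : 0 < x) (hy : 0 < y)
    (hxy : x + y < 1) :
    F₁ (y / (1 - x)) = F₁ y - F (x / (1 - y)) + x * F₁ (x / (1 - y)) / (1 - y) := by
  have h1x : 0 < 1 - x := by linarith
  have h1y : 0 < 1 - y := by linarith
  have hu : y / (1 - x) ∈ Ioo (0 : ℝ) 1 := ⟨by positivity, (div_lt_one h1x).2 (by linarith)⟩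
  have hv : x / (1 - y) ∈ Ioo (0 : ℝ) 1 := ⟨by positivity, (div_lt_one h1y).2 (by linarith)⟩
  have hL : HasDerivAt (fun z => F x + (1 - x) * F (z / (1 - x))) (F₁ (y / (1 - x))) y := by
    refine ((((hd1 _ hu).comp y ((hasDerivAt_id' y).div_const (1 - x))).const_mul
      (1 - x)).const_add (F x)).congr_deriv ?_
    field_simp
  have hR := (hd1 y ⟨hy, by linarith⟩).add (((hasDerivAt_id' y).const_sub 1).mul
    ((hd1 _ hv).comp y (hasDerivAt_div_one_sub x (by linarith))))
  have hLR : (fun z => F x + (1 - x) * F (z / (1 - x))) =ᶠ[𝓝 y]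
      fun z => F z + (1 - z) * F (x / (1 - z)) := by
    filter_upwards [Ioo_mem_nhds hy (show y < 1 - x by linarith)] with z hz
    exact hfe x z hx.le (by linarith) hz.1.le (by linarith [hz.2]) (by linarith [hz.2])
  rw [hL.unique (hR.congr_of_eventuallyEq hLR)]
  simp only [Function.comp_apply]
  field_simp
  ring

/-- `first_derivative_eq` differentiated in `x`. -/
theorem second_derivative_eq (hfe : SolvesFundamentalEquation F)
    (hd1 : ∀ t ∈ Ioo (0 : ℝ) 1, HasDerivAt F (F₁ t) t)
    (hd2 : ∀ t ∈ Ioo (0 : ℝ) 1, HasDerivAt F₁ (F₂ t) t) {x y : ℝ} (hx : 0 < x)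
    (hy : 0 < y) (hxy : x + y < 1) :
    F₂ (y / (1 - x)) * (y / (1 - x) ^ 2) = x * F₂ (x / (1 - y)) / (1 - y) ^ 2 := by
  have h1x : 0 < 1 - x := by linarith
  have h1y : 0 < 1 - y := by linarith
  have hu : y / (1 - x) ∈ Ioo (0 : ℝ) 1 := ⟨by positivity, (div_lt_one h1x).2 (by linarith)⟩
  have hv : x / (1 - y) ∈ Ioo (0 : ℝ) 1 := ⟨by positivity, (div_lt_one h1y).2 (by linarith)⟩
  have hL := (hd2 _ hu).comp x (hasDerivAt_div_one_sub y (by linarith))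
  have hdiv := (hasDerivAt_id' x).div_const (1 - y)
  have hR : HasDerivAt (fun w => F₁ y - F (w / (1 - y)) + w * F₁ (w / (1 - y)) / (1 - y))
      (x * F₂ (x / (1 - y)) / (1 - y) ^ 2) x := by
    refine (((hasDerivAt_const x (F₁ y)).sub ((hd1 _ hv).comp x hdiv)).add
      (((hasDerivAt_id' x).mul ((hd2 _ hv).comp x hdiv)).div_const (1 - y))).congr_deriv ?_
    simp only [Function.comp_apply]
    field_simp
    ring
  have hLR : (fun w => F₁ (y / (1 - w))) =ᶠ[𝓝 x]
      fun w => F₁ y - F (w / (1 - y)) + w * F₁ (w / (1 - y)) / (1 - y) := by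
    filter_upwards [Ioo_mem_nhds hx (show x < 1 - y by linarith)] with w hw
    exact hfe.first_derivative_eq hd1 hw.1 hy (by linarith [hw.2])
  exact hL.unique (hR.congr_of_eventuallyEq hLR)

theorem mul_one_sub_mul_eq (hfe : SolvesFundamentalEquation F)
    (hd1 : ∀ t ∈ Ioo (0 : ℝ) 1, HasDerivAt F (F₁ t) t)
    (hd2 : ∀ t ∈ Ioo (0 : ℝ) 1, HasDerivAt F₁ (F₂ t) t) {u v : ℝ}
    (hu : u ∈ Ioo (0 : ℝ) 1) (hv : v ∈ Ioo (0 : ℝ) 1) :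
    u * (1 - u) * F₂ u = v * (1 - v) * F₂ v := by
  obtain ⟨hu0, hu1⟩ := hu
  obtain ⟨hv0, hv1⟩ := hv
  have huv : 0 < 1 - u * v := by nlinarith
  have huv' : 1 - u * v ≠ 0 := huv.ne'
  have h1u : 0 < 1 - u := by linarith
  have h1v : 0 < 1 - v := by linarith
  -- this point `(x, y)` has `y / (1 - x) = u` and `x / (1 - y) = v`
  have key := hfe.second_derivative_eq hd1 hd2 (x := v * (1 - u) / (1 - u * v))
    (y := u * (1 - v) / (1 - u * v)) (by positivity) (by positivity)
    (by rw [← add_div, div_lt_one huv]; nlinarith)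
  have h1x : 1 - v * (1 - u) / (1 - u * v) = (1 - v) / (1 - u * v) := by
    rw [eq_div_iff huv', sub_mul, div_mul_cancel₀ _ huv']; ring
  have h1y : 1 - u * (1 - v) / (1 - u * v) = (1 - u) / (1 - u * v) := by
    rw [eq_div_iff huv', sub_mul, div_mul_cancel₀ _ huv']; ring
  rw [h1x, h1y, div_div_div_cancel_right₀ huv.ne', div_div_div_cancel_right₀ huv.ne',
    mul_div_cancel_right₀ _ h1v.ne', mul_div_cancel_right₀ _ h1u.ne'] at key
  field_simp at key
  linear_combination key

theorem eq_H2_add_mul_of_forall_mem_Ioo (hfe : SolvesFundamentalEquation F) {a b c : ℝ}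
    (h : ∀ t ∈ Ioo (0 : ℝ) 1, F t = a * H2 t + b * t + c) :
    ∀ y ∈ Icc (0 : ℝ) 1, F y = a * H2 y + b * y := by
  have hc : c = 0 := by
    have h' := hfe (1 / 2) (1 / 4) (by norm_num) (by norm_num) (by norm_num) (by norm_num)
      (by norm_num)
    have hH := H2_add_mul_H2_div_one_sub (x := 1 / 2) (y := 1 / 4) (by norm_num) (by norm_num)
      (by norm_num)
    norm_num at h' hH
    rw [h (1 / 2) (by norm_num), h (1 / 4) (by norm_num), h (2 / 3) (by norm_num)] at h'
    linear_combination (-4) * h' + (4 * a) * hH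
  have h0 : F 0 = 0 := by
    have h' := hfe 0 (1 / 2) le_rfl one_pos (by norm_num) (by norm_num) (by norm_num)
    norm_num at h'
    linarith
  have h1 : F 1 = b := by
    have h' := hfe (1 / 4) (3 / 4) (by norm_num) (by norm_num) (by norm_num) (by norm_num)
      (by norm_num)
    have hH := H2_one_sub (1 / 4)
    norm_num at h' hH
    rw [h (1 / 4) (by norm_num), h (3 / 4) (by norm_num), hH] at h'
    linarith
  rintro y ⟨hy0, hy1⟩
  rcases hy0.eq_or_lt with rfl | hy0
  · simp [h0, H2]
  rcases hy1.eq_or_lt with rfl | hy1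
  · simp [h1, H2]
  rw [h y ⟨hy0, hy1⟩, hc, add_zero]

theorem exists_eq_H2_add_mul (hfe : SolvesFundamentalEquation F) (hF : Measurable F) :
    ∃ a b : ℝ, ∀ y ∈ Icc (0 : ℝ) 1, F y = a * H2 y + b * y := by
  have hC2 : ContDiffOn ℝ 2 F (Ioo 0 1) := by exact_mod_cast hfe.contDiffOn hF 2
  have hd1 : ∀ t ∈ Ioo (0 : ℝ) 1, HasDerivAt F (deriv F t) t := fun t ht =>
    ((hC2.differentiableOn (by norm_num) t ht).differentiableAt
      (isOpen_Ioo.mem_nhds ht)).hasDerivAt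
  have hd2 : ∀ t ∈ Ioo (0 : ℝ) 1, HasDerivAt (deriv F) (deriv (deriv F) t) t := fun t ht =>
    (((hC2.deriv_of_isOpen isOpen_Ioo (m := 1) (by norm_num)).differentiableOn one_ne_zero t
      ht).differentiableAt (isOpen_Ioo.mem_nhds ht)).hasDerivAt
  obtain ⟨k, hk⟩ : ∃ k, ∀ t ∈ Ioo (0 : ℝ) 1, t * (1 - t) * deriv (deriv F) t = k :=
    ⟨_, fun t ht => hfe.mul_one_sub_mul_eq hd1 hd2 ht (v := 1 / 2) (by norm_num)⟩
  obtain ⟨b, c, hbc⟩ := exists_eq_H2_add_of_hasDerivAt hd1 hd2 hk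
  exact ⟨-k, b, hfe.eq_H2_add_mul_of_forall_mem_Ioo hbc⟩

end SolvesFundamentalEquation

theorem fundamental_equation_symmetric_solution_general (U E : ℝ → ℝ)
    (hU : Measurable ((Set.Icc (0:ℝ) 1).restrict U))
    (heq : ∀ q₁ q₃ : ℝ, 0 ≤ q₁ → q₁ < 1 → 0 ≤ q₃ → q₃ < 1 → q₁ + q₃ ≤ 1 →
      (1 - q₃) * U (q₁ / (1 - q₃)) + E q₃ = (1 - q₁) * U (q₃ / (1 - q₁)) + E q₁) :
    ∃ a b₁ b₂ d : ℝ,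
      (∀ y : ℝ, 0 ≤ y → y ≤ 1 → U y = a * H2 y + b₂ * y + (b₁ - b₂)) ∧
      (∀ x : ℝ, 0 ≤ x → x < 1 → E x = a * H2 x + b₁ * x + d) := by
  -- cut off outside `[0, 1]`, where `U` need not be measurable
  set F : ℝ → ℝ := fun t => if t ∈ Icc (0 : ℝ) 1 then U t - U 0 else 0
  have hF : Measurable F := (hU.sub_const (U 0)).dite measurable_const measurableSet_Icc
  have hFU : ∀ t ∈ Icc (0 : ℝ) 1, F t = U t - U 0 := fun t ht => if_pos ht
  have hEU : ∀ q, 0 ≤ q → q < 1 → E q = U q - (1 - q) * U 0 + E 0 := fun q hq hq1 => by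
    have h := heq q 0 hq hq1 le_rfl one_pos (by linarith)
    simp only [sub_zero, div_one, zero_div] at h
    linarith
  have hfe : SolvesFundamentalEquation F := fun x y hx hx1 hy hy1 hxy => by
    rw [hFU x ⟨hx, hx1.le⟩, hFU y ⟨hy, hy1.le⟩, hFU _ (div_one_sub_mem_Icc hx1 hy hxy),
      hFU _ (div_one_sub_mem_Icc hy1 hx (by linarith))]
    linear_combination heq y x hy hy1 hx hx1 (by linarith) - hEU x hx hx1 + hEU y hy hy1
  obtain ⟨a, b, hab⟩ := hfe.exists_eq_H2_add_mul hF
  refine ⟨a, b + U 0, b, E 0, fun y hy hy1 => ?_, fun x hx hx1 => ?_⟩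
  · linear_combination hab y ⟨hy, hy1⟩ - hFU y ⟨hy, hy1⟩
  · linear_combination hEU x hx hx1 + hab x ⟨hx, hx1.le⟩ - hFU x ⟨hx, hx1.le⟩

/-- Symmetric special case of the generalized fundamental equation of
information theory: measurable `U, E` satisfying
`(1-q₃)U(q₁/(1-q₃)) + E(q₃) = (1-q₁)U(q₃/(1-q₁)) + E(q₁)` must be of entropy-plus-affine
form. -/
theorem fundamental_equation_symmetric_solution (U E : ℝ → ℝ)
    (hU : Measurable ((Set.Icc (0:ℝ) 1).restrict U))
    (hE : Measurable ((Set.Ico (0:ℝ) 1).restrict E))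
    (heq : ∀ q₁ q₃ : ℝ, 0 ≤ q₁ → q₁ < 1 → 0 ≤ q₃ → q₃ < 1 → q₁ + q₃ ≤ 1 →
      (1 - q₃) * U (q₁ / (1 - q₃)) + E q₃ = (1 - q₁) * U (q₃ / (1 - q₁)) + E q₁) :
    ∃ a b₁ b₂ d : ℝ,
      (∀ y : ℝ, 0 ≤ y → y ≤ 1 → U y = a * H2 y + b₂ * y + (b₁ - b₂)) ∧
      (∀ x : ℝ, 0 ≤ x → x < 1 → E x = a * H2 x + b₁ * x + d) :=
  fundamental_equation_symmetric_solution_general U E hU heq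
end

section
/- For |𝒳| = n ≥ 3, if a loss function ℓ satisfies the Data Processing Axiom — C(ℓ, P_TY) ≤ C(ℓ, P_XY) for every statistically sufficient transformation T of X for Y — then C(ℓ, P_XY) = A·I(X;Y) for some constant A > 0 (or A = 0), for all joint distributions P_XY. -/
open scoped BigOperators

def IsDist {α : Type*} [Fintype α] (p : α → ℝ) : Prop :=
  (∀ a, 0 ≤ p a) ∧ ∑ a, p a = 1

noncomputable def logLoss {α : Type*} (Q : α → ℝ) (x : α) : EReal :=
  if Q x = 0 then ⊤ else ((-Real.log (Q x) : ℝ) : EReal)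

noncomputable def negEnt {α : Type*} [Fintype α] (p : α → ℝ) : ℝ :=
  ∑ a, p a * Real.log (p a)

noncomputable def ent {α : Type*} [Fintype α] (p : α → ℝ) : ℝ := -negEnt p

noncomputable def margX {α β : Type*} [Fintype β] (p : α × β → ℝ) (x : α) : ℝ := ∑ y, p (x, y)

noncomputable def margY {α β : Type*} [Fintype α] (p : α × β → ℝ) (y : β) : ℝ := ∑ x, p (x, y)

noncomputable def condX {α β : Type*} [Fintype α] (p : α × β → ℝ) (y : β) (x : α) : ℝ :=
  p (x, y) / margY p y

noncomputable def mutInfo {α β : Type*} [Fintype α] [Fintype β] (p : α × β → ℝ) : ℝ :=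
  ent (margX p) + ent (margY p) - ent p

/-- The Jensen gap `Σ_y P_Y(y) G(P_{X|Y=y}) - G(P_X)` of `G` for a joint distribution. -/
noncomputable def jensenGap {α β : Type*} [Fintype α] [Fintype β]
    (G : (α → ℝ) → ℝ) (q : α × β → ℝ) : ℝ :=
  (∑ y, margY q y * G (condX q y)) - G (margX q)

/-- Marginal joint law of `(X,Y)` from a joint law of `(X,T,Y)`. -/
noncomputable def margXY {α β : Type*} [Fintype α] (r : α × α × β → ℝ) :
    α × β → ℝ := fun z => ∑ t, r (z.1, t, z.2)

/-- Marginal joint law of `(T,Y)` from a joint law of `(X,T,Y)`. -/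
noncomputable def margTY {α β : Type*} [Fintype α] (r : α × α × β → ℝ) :
    α × β → ℝ := fun z => ∑ x, r (x, z.1, z.2)

/-- The Markov chain `T – X – Y`: `T` and `Y` are conditionally independent given `X`,
expressed as `p(x,t,y)·p(x) = p(x,t)·p(x,y)`. -/
def MarkovTXY {α β : Type*} [Fintype α] [Fintype β] (r : α × α × β → ℝ) : Prop :=
  ∀ x t y, r (x, t, y) * (∑ t', ∑ y', r (x, t', y'))
    = (∑ y', r (x, t, y')) * (∑ t', r (x, t', y))

/-- The Markov chain `X – T – Y`: `X` and `Y` are conditionally independent given `T`,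
expressed as `p(x,t,y)·p(t) = p(x,t)·p(t,y)`. -/
def MarkovXTY {α β : Type*} [Fintype α] [Fintype β] (r : α × α × β → ℝ) : Prop :=
  ∀ x t y, r (x, t, y) * (∑ x', ∑ y', r (x', t, y'))
    = (∑ y', r (x, t, y')) * (∑ x', r (x', t, y))

/-- The benefit of side information `C(ℓ, P_XY)`:
optimal risk without side information minus optimal risk with side information `Y`. -/
noncomputable def benefit {α β Xh : Type*} [Fintype α] [Fintype β]
    (ℓ : α → Xh → ℝ) (q : α × β → ℝ) : ℝ :=
  (⨅ xh, ∑ x, margX q x * ℓ x xh) - ⨅ f : β → Xh, ∑ z : α × β, q z * ℓ z.1 (f z.2)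

/-!
Write `G v = ⨅ x̂, ∑ x, v x * ℓ x x̂` for the Bayes risk of a nonnegative vector `v` and
`K v = G v - ∑ x, v x * G (δ x)` for the value of perfect information. The benefit is
`K P_X - ∑ y, K P_{X, Y = y}`, and mutual information has the same shape with `K` replaced by the
homogeneous Shannon entropy `H`, so it suffices to show `K = A • H`.

If `T = g X` and `Y` is a function of `T`, then `T – X – Y` and `X – T – Y` hold, and they still
hold with the roles of `X` and `T` exchanged; so the axiom gives equality of the two benefits.
Taking `g` a permutation and `Y = X` shows that `K` is invariant under relabelling; taking `g` the
map merging `j` into `i` and `Y = 1[T = i]` gives `K v = θ (v i) (v j) + K (merge v)` with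
`θ a b = K (a δ i + b δ j)`. Merging three letters in two orders gives the cocycle identity for
`θ`, which is also symmetric, homogeneous and (as `G` is concave) superadditive. These force
`θ a b = A (h a + h b - h (a + b))` with `h x = -x log x`: on integers through the monotone and
completely additive `k ↦ (θ-entropy of k unit masses) / k`, then on rationals by homogeneity and
everywhere by continuity of concave functions. Merging letter by letter then gives `K = A • H`.
-/

open Real

lemma margX_nonneg {α β : Type*} [Fintype β] {q : α × β → ℝ} (hq : 0 ≤ q) : 0 ≤ margX q :=
  fun x => Finset.sum_nonneg fun y _ => hq (x, y)

lemma isDist_inv_sum_smul {ι : Type*} [Fintype ι] {v : ι → ℝ} (hv : 0 ≤ v)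
    (hs : 0 < ∑ i, v i) : IsDist ((∑ i, v i)⁻¹ • v) :=
  ⟨fun i => mul_nonneg (inv_nonneg.2 hs.le) (hv i), by
    simp only [Pi.smul_apply, smul_eq_mul, ← Finset.mul_sum, inv_mul_cancel₀ hs.ne']⟩

section BayesRisk

variable {α β Xh : Type*} [Fintype α] [Fintype β]

noncomputable def bayesRisk (ℓ : α → Xh → ℝ) (v : α → ℝ) : ℝ := ⨅ xh, ∑ x, v x * ℓ x xh

def RiskBddBelow (ℓ : α → Xh → ℝ) : Prop :=
  ∀ P : α → ℝ, IsDist P → BddBelow (Set.range fun xh => ∑ x, P x * ℓ x xh)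

lemma RiskBddBelow.bddBelow {ℓ : α → Xh → ℝ} (hℓ : RiskBddBelow ℓ) {v : α → ℝ} (hv : 0 ≤ v) :
    BddBelow (Set.range fun xh => ∑ x, v x * ℓ x xh) := by
  obtain hs | hs := (Fintype.sum_nonneg hv).eq_or_lt
  · rw [(Fintype.sum_eq_zero_iff_of_nonneg hv).1 hs.symm]
    exact ⟨0, by rintro _ ⟨xh, rfl⟩; simp⟩
  obtain ⟨b, hb⟩ := hℓ _ (isDist_inv_sum_smul hv hs)
  refine ⟨(∑ x, v x) * b, ?_⟩
  rintro _ ⟨xh, rfl⟩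
  have hscale : ∑ x, v x * ℓ x xh = (∑ x, v x) * ∑ x, ((∑ x, v x)⁻¹ • v) x * ℓ x xh := by
    simp [Finset.mul_sum, ← mul_assoc, mul_inv_cancel₀ hs.ne']
  simp only [hscale]
  exact mul_le_mul_of_nonneg_left (hb ⟨xh, rfl⟩) hs.le

lemma bayesRisk_le {ℓ : α → Xh → ℝ} (hℓ : RiskBddBelow ℓ) {v : α → ℝ} (hv : 0 ≤ v) (xh : Xh) :
    bayesRisk ℓ v ≤ ∑ x, v x * ℓ x xh :=
  ciInf_le (hℓ.bddBelow hv) xh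

lemma bayesRisk_smul (ℓ : α → Xh → ℝ) (v : α → ℝ) {c : ℝ} (hc : 0 ≤ c) :
    bayesRisk ℓ (c • v) = c * bayesRisk ℓ v := by
  simp only [bayesRisk, Real.mul_iInf_of_nonneg hc, Finset.mul_sum, Pi.smul_apply, smul_eq_mul,
    mul_assoc]

lemma bayesRisk_add_bayesRisk_le [Nonempty Xh] {ℓ : α → Xh → ℝ} (hℓ : RiskBddBelow ℓ)
    {u v : α → ℝ} (hu : 0 ≤ u) (hv : 0 ≤ v) :
    bayesRisk ℓ u + bayesRisk ℓ v ≤ bayesRisk ℓ (u + v) :=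
  le_ciInf fun xh => by
    simpa only [Pi.add_apply, add_mul, Finset.sum_add_distrib] using
      add_le_add (bayesRisk_le hℓ hu xh) (bayesRisk_le hℓ hv xh)

lemma ciInf_sum_eq_sum_ciInf [Nonempty Xh] (g : β → Xh → ℝ)
    (hg : ∀ y, BddBelow (Set.range (g y))) :
    ⨅ f : β → Xh, ∑ y, g y (f y) = ∑ y, ⨅ xh, g y xh := by
  refine le_antisymm (le_of_forall_pos_le_add fun ε hε => ?_)
    (le_ciInf fun f => Finset.sum_le_sum fun y _ => ciInf_le (hg y) (f y))
  have hε' : 0 < ε / (Fintype.card β + 1) := by positivity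
  choose f hf using fun y => exists_lt_of_ciInf_lt (lt_add_of_pos_right (⨅ xh, g y xh) hε')
  have hbdd : BddBelow (Set.range fun f : β → Xh => ∑ y, g y (f y)) :=
    ⟨∑ y, ⨅ xh, g y xh, by
      rintro _ ⟨f, rfl⟩; exact Finset.sum_le_sum fun y _ => ciInf_le (hg y) (f y)⟩
  have hcard : (Fintype.card β : ℝ) * (ε / (Fintype.card β + 1)) ≤ ε := by
    rw [mul_div_assoc', div_le_iff₀ (by positivity)]
    nlinarith
  calc ⨅ f : β → Xh, ∑ y, g y (f y) ≤ ∑ y, g y (f y) := ciInf_le hbdd f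
    _ ≤ ∑ y, ((⨅ xh, g y xh) + ε / (Fintype.card β + 1)) := Finset.sum_le_sum fun y _ => (hf y).le
    _ ≤ (∑ y, ⨅ xh, g y xh) + ε := by
      rw [Finset.sum_add_distrib, Finset.sum_const, Finset.card_univ, nsmul_eq_mul]
      linarith

lemma benefit_eq_bayesRisk [Nonempty Xh] {ℓ : α → Xh → ℝ} (hℓ : RiskBddBelow ℓ)
    {q : α × β → ℝ} (hq : 0 ≤ q) :
    benefit ℓ q = bayesRisk ℓ (margX q) - ∑ y, bayesRisk ℓ (fun x => q (x, y)) := by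
  simp only [benefit, bayesRisk, Fintype.sum_prod_type_right]
  rw [ciInf_sum_eq_sum_ciInf (fun y xh => ∑ x, q (x, y) * ℓ x xh)
    fun y => hℓ.bddBelow fun x => hq (x, y)]

lemma benefit_smul (ℓ : α → Xh → ℝ) (q : α × β → ℝ) {c : ℝ} (hc : 0 ≤ c) :
    benefit ℓ (c • q) = c * benefit ℓ q := by
  have hmarg : margX (c • q) = c • margX q := by
    ext x; simp [margX, Finset.mul_sum]
  simp only [benefit, hmarg, mul_sub, Real.mul_iInf_of_nonneg hc, Finset.mul_sum,
    Pi.smul_apply, smul_eq_mul, mul_assoc]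

end BayesRisk

section JointLaws

variable {α β : Type*}

def swapXT (r : α × α × β → ℝ) : α × α × β → ℝ := fun w => r (w.2.1, w.1, w.2.2)

lemma IsDist.swapXT [Fintype α] [Fintype β] {r : α × α × β → ℝ} (hr : IsDist r) :
    IsDist (swapXT r) := by
  refine ⟨fun w => hr.1 _, ?_⟩
  rw [← hr.2]
  simp only [Fintype.sum_prod_type]
  exact Finset.sum_comm

lemma MarkovTXY.smul [Fintype α] [Fintype β] {r : α × α × β → ℝ} (h : MarkovTXY r) (c : ℝ) :
    MarkovTXY (c • r) := by
  intro x t y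
  simp only [Pi.smul_apply, smul_eq_mul, ← Finset.mul_sum]
  linear_combination c ^ 2 * h x t y

lemma MarkovXTY.smul [Fintype α] [Fintype β] {r : α × α × β → ℝ} (h : MarkovXTY r) (c : ℝ) :
    MarkovXTY (c • r) := by
  intro x t y
  simp only [Pi.smul_apply, smul_eq_mul, ← Finset.mul_sum]
  linear_combination c ^ 2 * h x t y

lemma margXY_smul [Fintype α] (r : α × α × β → ℝ) (c : ℝ) : margXY (c • r) = c • margXY r := by
  ext z; simp [margXY, Finset.mul_sum]

lemma margTY_smul [Fintype α] (r : α × α × β → ℝ) (c : ℝ) : margTY (c • r) = c • margTY r := by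
  ext z; simp [margTY, Finset.mul_sum]

def graphLaw [DecidableEq β] (v : α → ℝ) (f : α → β) : α × β → ℝ :=
  fun z => if f z.1 = z.2 then v z.1 else 0

def pushVec [Fintype α] [DecidableEq β] (g : α → β) (v : α → ℝ) : β → ℝ :=
  fun t => ∑ x, if g x = t then v x else 0

def chainLaw [DecidableEq α] [DecidableEq β] (v : α → ℝ) (g : α → α) (h : α → β) : α × α × β → ℝ :=
  fun w => if g w.1 = w.2.1 ∧ h w.2.1 = w.2.2 then v w.1 else 0

variable [DecidableEq α] [DecidableEq β] {v : α → ℝ} (g : α → α) (h : α → β)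

lemma margXY_chainLaw [Fintype α] : margXY (chainLaw v g h) = graphLaw v (h ∘ g) := by
  ext ⟨x, y⟩
  simp [margXY, chainLaw, graphLaw, ite_and]

lemma margTY_chainLaw [Fintype α] : margTY (chainLaw v g h) = graphLaw (pushVec g v) h := by
  ext ⟨t, y⟩
  by_cases hty : h t = y <;> simp [margTY, chainLaw, graphLaw, pushVec, hty]

lemma markovTXY_chainLaw [Fintype α] [Fintype β] : MarkovTXY (chainLaw v g h) := by
  intro x t y
  by_cases hxt : g x = t <;> by_cases hty : h t = y <;> simp [chainLaw, ite_and, hxt, hty]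

lemma markovXTY_chainLaw [Fintype α] [Fintype β] : MarkovXTY (chainLaw v g h) := by
  intro x t y
  by_cases hxt : g x = t <;> by_cases hty : h t = y <;> simp [chainLaw, ite_and, hxt, hty]

lemma chainLaw_nonneg (hv : 0 ≤ v) : 0 ≤ chainLaw v g h := by
  intro w
  unfold chainLaw
  split_ifs
  exacts [hv _, le_rfl]

end JointLaws

section DataProcessing

variable {α : Type*} [Fintype α] {Xh : Type*}

def DataProcessing (ℓ : α → Xh → ℝ) : Prop :=
  ∀ (Y : Type) [Fintype Y] (r : α × α × Y → ℝ), IsDist r →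
    MarkovTXY r → MarkovXTY r → benefit ℓ (margTY r) ≤ benefit ℓ (margXY r)

variable {β : Type} [Fintype β] {ℓ : α → Xh → ℝ}

lemma DataProcessing.benefit_margTY_eq (hdp : DataProcessing ℓ) {r : α × α × β → ℝ}
    (hr : IsDist r) (hTXY : MarkovTXY r) (hXTY : MarkovXTY r) :
    benefit ℓ (margTY r) = benefit ℓ (margXY r) :=
  le_antisymm (hdp β r hr hTXY hXTY)
    (hdp β (swapXT r) hr.swapXT (fun x t y => hXTY t x y) fun x t y => hTXY t x y)

lemma DataProcessing.benefit_margTY_eq_of_nonneg (hdp : DataProcessing ℓ)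
    {r : α × α × β → ℝ} (hr : 0 ≤ r) (hTXY : MarkovTXY r) (hXTY : MarkovXTY r) :
    benefit ℓ (margTY r) = benefit ℓ (margXY r) := by
  obtain hs | hs := (Fintype.sum_nonneg hr).eq_or_lt
  · rw [(Fintype.sum_eq_zero_iff_of_nonneg hr).1 hs.symm]
    rfl
  have key := hdp.benefit_margTY_eq (isDist_inv_sum_smul hr hs) (hTXY.smul _) (hXTY.smul _)
  rwa [margTY_smul, margXY_smul, benefit_smul _ _ (inv_nonneg.2 hs.le),
    benefit_smul _ _ (inv_nonneg.2 hs.le), mul_right_inj' (inv_ne_zero hs.ne')] at key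

lemma DataProcessing.benefit_graphLaw_pushVec [DecidableEq α] [DecidableEq β]
    (hdp : DataProcessing ℓ) {v : α → ℝ} (hv : 0 ≤ v) (g : α → α) (h : α → β) :
    benefit ℓ (graphLaw (pushVec g v) h) = benefit ℓ (graphLaw v (h ∘ g)) := by
  rw [← margTY_chainLaw, ← margXY_chainLaw]
  exact hdp.benefit_margTY_eq_of_nonneg (chainLaw_nonneg g h hv) (markovTXY_chainLaw g h)
    (markovXTY_chainLaw g h)

end DataProcessing

section PerfectInfo

variable {α : Type*} [Fintype α] [DecidableEq α] {Xh : Type*}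

noncomputable def perfectInfoValue (ℓ : α → Xh → ℝ) (v : α → ℝ) : ℝ :=
  bayesRisk ℓ v - ∑ x, v x * bayesRisk ℓ (Pi.single x 1)

lemma perfectInfoValue_smul (ℓ : α → Xh → ℝ) (v : α → ℝ) {c : ℝ} (hc : 0 ≤ c) :
    perfectInfoValue ℓ (c • v) = c * perfectInfoValue ℓ v := by
  simp only [perfectInfoValue, bayesRisk_smul ℓ v hc, mul_sub, Finset.mul_sum, Pi.smul_apply,
    smul_eq_mul, mul_assoc]

lemma perfectInfoValue_zero (ℓ : α → Xh → ℝ) : perfectInfoValue ℓ 0 = 0 := by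
  simpa using perfectInfoValue_smul ℓ 0 le_rfl

lemma perfectInfoValue_single (ℓ : α → Xh → ℝ) (i : α) {a : ℝ} (ha : 0 ≤ a) :
    perfectInfoValue ℓ (Pi.single i a) = 0 := by
  have hsingle : Pi.single i a = a • (Pi.single i 1 : α → ℝ) := by
    rw [← Pi.single_smul', smul_eq_mul, mul_one]
  rw [perfectInfoValue, hsingle, bayesRisk_smul ℓ _ ha]
  simp [Pi.single_apply]

lemma perfectInfoValue_add_le [Nonempty Xh] {ℓ : α → Xh → ℝ} (hℓ : RiskBddBelow ℓ)
    {u v : α → ℝ} (hu : 0 ≤ u) (hv : 0 ≤ v) :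
    perfectInfoValue ℓ u + perfectInfoValue ℓ v ≤ perfectInfoValue ℓ (u + v) := by
  have := bayesRisk_add_bayesRisk_le hℓ hu hv
  simp only [perfectInfoValue, Pi.add_apply, add_mul, Finset.sum_add_distrib]
  linarith

lemma benefit_eq_perfectInfoValue [Nonempty Xh] {β : Type} [Fintype β] {ℓ : α → Xh → ℝ}
    (hℓ : RiskBddBelow ℓ) {q : α × β → ℝ} (hq : 0 ≤ q) :
    benefit ℓ q = perfectInfoValue ℓ (margX q) - ∑ y, perfectInfoValue ℓ (fun x => q (x, y)) := by
  rw [benefit_eq_bayesRisk hℓ hq]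
  simp only [perfectInfoValue, Finset.sum_sub_distrib, margX, Finset.sum_mul]
  rw [Finset.sum_comm (γ := β)]
  ring

lemma benefit_graphLaw [Nonempty Xh] {β : Type} [Fintype β] [DecidableEq β] {ℓ : α → Xh → ℝ}
    (hℓ : RiskBddBelow ℓ) {v : α → ℝ} (hv : 0 ≤ v) (f : α → β) :
    benefit ℓ (graphLaw v f) =
      perfectInfoValue ℓ v - ∑ y, perfectInfoValue ℓ (fun x => if f x = y then v x else 0) := by
  have hmarg : margX (graphLaw v f) = v := by ext x; simp [margX, graphLaw]
  rw [benefit_eq_perfectInfoValue hℓ, hmarg]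
  · rfl
  · rintro ⟨x, y⟩
    unfold graphLaw
    split_ifs
    exacts [hv x, le_rfl]

lemma benefit_graphLaw_of_injective [Nonempty Xh] {β : Type} [Fintype β] [DecidableEq β]
    {ℓ : α → Xh → ℝ} (hℓ : RiskBddBelow ℓ) {v : α → ℝ} (hv : 0 ≤ v) {f : α → β}
    (hf : Function.Injective f) :
    benefit ℓ (graphLaw v f) = perfectInfoValue ℓ v := by
  rw [benefit_graphLaw hℓ hv, sub_eq_self]
  refine Finset.sum_eq_zero fun y _ => ?_
  by_cases hy : ∃ x, f x = y
  · obtain ⟨x₀, rfl⟩ := hy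
    have hcol : (fun x => if f x = f x₀ then v x else 0) = Pi.single x₀ (v x₀) := by
      ext x; by_cases hx : x = x₀ <;> simp [hf.eq_iff, hx]
    rw [hcol, perfectInfoValue_single ℓ x₀ (hv x₀)]
  · simp only [not_exists] at hy
    have hcol : (fun x => if f x = y then v x else 0) = 0 := by ext x; simp [hy x]
    rw [hcol, perfectInfoValue_zero]

end PerfectInfo

section Relabel

variable {α : Type} [Fintype α] [DecidableEq α] {Xh : Type*}

lemma pushVec_perm (σ : Equiv.Perm α) (v : α → ℝ) : pushVec σ v = v ∘ σ.symm := by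
  ext t
  simp [pushVec, ← Equiv.eq_symm_apply]

lemma DataProcessing.perfectInfoValue_comp_perm [Nonempty Xh] {ℓ : α → Xh → ℝ}
    (hdp : DataProcessing ℓ) (hℓ : RiskBddBelow ℓ) {v : α → ℝ} (hv : 0 ≤ v)
    (σ : Equiv.Perm α) :
    perfectInfoValue ℓ (v ∘ σ.symm) = perfectInfoValue ℓ v := by
  have key := hdp.benefit_graphLaw_pushVec hv σ σ.symm
  rwa [σ.symm_comp_self, benefit_graphLaw_of_injective hℓ hv Function.injective_id,
    pushVec_perm, benefit_graphLaw_of_injective hℓ (v := v ∘ σ.symm) (fun x => hv (σ.symm x))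
      σ.symm.injective] at key

lemma DataProcessing.perfectInfoValue_pair_eq [Nonempty Xh] {ℓ : α → Xh → ℝ}
    (hdp : DataProcessing ℓ) (hℓ : RiskBddBelow ℓ) {i j k l : α} (hij : i ≠ j) (hkl : k ≠ l)
    {a b : ℝ} (ha : 0 ≤ a) (hb : 0 ≤ b) :
    perfectInfoValue ℓ (Pi.single i a + Pi.single j b : α → ℝ) =
      perfectInfoValue ℓ (Pi.single k a + Pi.single l b : α → ℝ) := by
  obtain ⟨σ, hσi, hσj⟩ :=
    MulAction.is_two_pretransitive_iff.mp (Equiv.Perm.isMultiplyPretransitive α 2) hij hkl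
  have hpair :
      (Pi.single i a + Pi.single j b : α → ℝ) ∘ σ.symm = Pi.single k a + Pi.single l b := by
    rw [Pi.add_comp, Pi.single_comp_equiv, Pi.single_comp_equiv, σ.symm_symm, ← hσi, ← hσj]
    rfl
  rw [← hpair, hdp.perfectInfoValue_comp_perm hℓ]
  exact add_nonneg (Pi.single_nonneg.2 ha) (Pi.single_nonneg.2 hb)

end Relabel

section Merge

variable {α : Type*} [DecidableEq α]

def mergeVec (i j : α) (v : α → ℝ) : α → ℝ :=
  Function.update (Function.update v j 0) i (v i + v j)

lemma mergeVec_nonneg {v : α → ℝ} (hv : 0 ≤ v) (i j : α) : 0 ≤ mergeVec i j v := by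
  intro x
  simp only [mergeVec, Function.update_apply]
  split_ifs
  exacts [add_nonneg (hv i) (hv j), le_rfl, hv x]

lemma mergeVec_apply_left (i j : α) (v : α → ℝ) : mergeVec i j v i = v i + v j := by
  simp [mergeVec]

lemma mergeVec_apply_right {i j : α} (hij : i ≠ j) (v : α → ℝ) : mergeVec i j v j = 0 := by
  simp [mergeVec, hij.symm]

lemma mergeVec_apply_of_ne {i j x : α} (hi : x ≠ i) (hj : x ≠ j) (v : α → ℝ) :
    mergeVec i j v x = v x := by
  simp [mergeVec, hi, hj]

lemma eq_zero_of_eq_mergeVec [Fintype α] {D : (α → ℝ) → ℝ} (i : α)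
    (hmerge : ∀ v, 0 ≤ v → ∀ j ≠ i, D v = D (mergeVec i j v))
    (hsingle : ∀ a, 0 ≤ a → D (Pi.single i a) = 0) {v : α → ℝ} (hv : 0 ≤ v) : D v = 0 := by
  suffices ∀ s : Finset α, ∀ v, 0 ≤ v → (∀ x ∉ insert i s, v x = 0) → D v = 0 from
    this Finset.univ v hv (by simp)
  intro s
  induction s using Finset.induction_on with
  | empty =>
    intro v hv hsupp
    have hvi : v = Pi.single i (v i) := by
      ext x; by_cases hx : x = i <;> simp_all
    rw [hvi, hsingle _ (hv i)]
  | insert j s _ ih =>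
    intro v hv hsupp
    by_cases hji : j = i
    · subst hji
      exact ih v hv (by simpa using hsupp)
    rw [hmerge v hv j hji]
    refine ih _ (mergeVec_nonneg hv i j) fun x hx => ?_
    by_cases hxj : x = j
    · rw [hxj, mergeVec_apply_right (Ne.symm hji)]
    · rw [Finset.mem_insert, not_or] at hx
      rw [mergeVec_apply_of_ne hx.1 hxj]
      exact hsupp x (by simp [hx.1, hx.2, hxj])

lemma pushVec_update_id [Fintype α] {i j : α} (hij : i ≠ j) (v : α → ℝ) :
    pushVec (Function.update id j i) v = mergeVec i j v := by
  ext t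
  simp only [pushVec, mergeVec, Function.update_apply, id]
  by_cases hti : t = i
  · subst hti
    rw [Fintype.sum_eq_add t j hij fun x hx => by simp [hx.1, hx.2]]
    simp
  · rw [Fintype.sum_eq_single t fun x hx => by split_ifs <;> simp_all [eq_comm]]
    split_ifs <;> simp_all

end Merge

lemma DataProcessing.perfectInfoValue_merge {α : Type*} [Fintype α] [DecidableEq α]
    {Xh : Type*} [Nonempty Xh] {ℓ : α → Xh → ℝ} (hdp : DataProcessing ℓ) (hℓ : RiskBddBelow ℓ)
    {i j : α} (hij : i ≠ j) {v : α → ℝ} (hv : 0 ≤ v) :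
    perfectInfoValue ℓ v = perfectInfoValue ℓ (Pi.single i (v i) + Pi.single j (v j)) +
      perfectInfoValue ℓ (mergeVec i j v) := by
  -- `T` merges `j` into `i`, and `Y = 1[T = i] = 1[X ∈ {i, j}]`
  have key := hdp.benefit_graphLaw_pushVec hv (Function.update id j i) (fun t => decide (t = i))
  rw [pushVec_update_id hij, benefit_graphLaw hℓ (mergeVec_nonneg hv i j), benefit_graphLaw hℓ hv,
    Fintype.sum_bool, Fintype.sum_bool] at key
  simp only [Function.comp_apply, decide_eq_true_eq, decide_eq_false_iff_not] at key
  have hmerged : (fun x => if x = i then mergeVec i j v x else 0) = Pi.single i (v i + v j) := by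
    ext x; by_cases hx : x = i <;> simp [mergeVec, hx]
  have hpair : (fun x => if Function.update id j i x = i then v x else 0) =
      Pi.single i (v i) + Pi.single j (v j) := by
    ext x; by_cases hxj : x = j <;> by_cases hxi : x = i <;> simp_all [Function.update_apply]
  have hrest : (fun x => if ¬x = i then mergeVec i j v x else 0) =
      fun x => if ¬Function.update id j i x = i then v x else 0 := by
    ext x
    by_cases hxj : x = j <;> by_cases hxi : x = i <;> simp_all [mergeVec, Function.update_apply]
  rw [hmerged, hpair, hrest, perfectInfoValue_single ℓ i (add_nonneg (hv i) (hv j))] at key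
  linarith

section ScaledEntropy

variable {α : Type*} [Fintype α]

noncomputable def pairEntropy (a b : ℝ) : ℝ := negMulLog a + negMulLog b - negMulLog (a + b)

noncomputable def scaledEntropy (v : α → ℝ) : ℝ := ∑ x, negMulLog (v x) - negMulLog (∑ x, v x)

lemma ent_eq_sum_negMulLog (p : α → ℝ) : ent p = ∑ x, negMulLog (p x) := by
  simp [ent, negEnt, negMulLog, ← Finset.sum_neg_distrib]

lemma mutInfo_eq_scaledEntropy {β : Type*} [Fintype β] {q : α × β → ℝ} (hq : ∑ z, q z = 1) :
    mutInfo q = scaledEntropy (margX q) - ∑ y, scaledEntropy (fun x => q (x, y)) := by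
  have hmarg : ∑ x, margX q x = 1 := by rw [← hq, Fintype.sum_prod_type]; rfl
  simp only [mutInfo, scaledEntropy, ent_eq_sum_negMulLog, hmarg, negMulLog_one,
    Finset.sum_sub_distrib, Fintype.sum_prod_type_right, margY]
  ring

variable [DecidableEq α]

lemma scaledEntropy_single (i : α) (a : ℝ) : scaledEntropy (Pi.single i a) = 0 := by
  simp [scaledEntropy, Pi.single_apply, apply_ite negMulLog]

lemma scaledEntropy_merge {i j : α} (hij : i ≠ j) (v : α → ℝ) :
    scaledEntropy v = pairEntropy (v i) (v j) + scaledEntropy (mergeVec i j v) := by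
  have hsum : ∑ x, v x - ∑ x, mergeVec i j v x = 0 := by
    rw [← Finset.sum_sub_distrib, Fintype.sum_eq_add i j hij fun x hx => by
      rw [mergeVec_apply_of_ne hx.1 hx.2, sub_self]]
    rw [mergeVec_apply_left, mergeVec_apply_right hij]
    ring
  have hneg :
      ∑ x, negMulLog (v x) - ∑ x, negMulLog (mergeVec i j v x) = pairEntropy (v i) (v j) := by
    rw [← Finset.sum_sub_distrib, Fintype.sum_eq_add i j hij fun x hx => by
      rw [mergeVec_apply_of_ne hx.1 hx.2, sub_self]]
    rw [mergeVec_apply_left, mergeVec_apply_right hij, pairEntropy, negMulLog_zero]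
    ring
  rw [scaledEntropy, scaledEntropy, ← hneg, sub_eq_zero.1 hsum]
  ring

end ScaledEntropy

lemma pairEntropy_mul (c a b : ℝ) : pairEntropy (c * a) (c * b) = c * pairEntropy a b := by
  simp only [pairEntropy, ← mul_add, negMulLog_mul]
  ring

lemma eq_div_log_two_mul_log_of_monotone {φ : ℕ → ℝ} (hmono : Monotone φ)
    (hmul : ∀ m k, 0 < m → 0 < k → φ (m * k) = φ m + φ k) {m : ℕ} (hm : 0 < m) :
    φ m = φ 2 / log 2 * log m := by
  have hφ1 : φ 1 = 0 := by linarith [hmul 1 1 one_pos one_pos]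
  have hpow : ∀ m' k : ℕ, 0 < m' → φ (m' ^ k) = k * φ m' := by
    intro m' k hm'
    induction k with
    | zero => simp [hφ1]
    | succ k ih => rw [pow_succ, hmul _ _ (pow_pos hm' k) hm', ih]; push_cast; ring
  have hφ2 : 0 ≤ φ 2 := hφ1 ▸ hmono one_le_two
  have hlog2 : 0 < log 2 := log_pos one_lt_two
  set D := φ m * log 2 - φ 2 * log m
  have hbound : ∀ k : ℕ, k * |D| ≤ φ 2 * log 2 := by
    intro k
    -- squeeze `m ^ k` between consecutive powers of `2`
    set a := Nat.log 2 (m ^ k)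
    have hlow : 2 ^ a ≤ m ^ k := Nat.pow_log_le_self 2 (pow_pos hm k).ne'
    have hupp : m ^ k ≤ 2 ^ (a + 1) := (Nat.lt_pow_succ_log_self one_lt_two _).le
    have hφlow : a * φ 2 ≤ k * φ m := by
      rw [← hpow 2 a two_pos, ← hpow m k hm]; exact hmono hlow
    have hφupp : k * φ m ≤ (a + 1) * φ 2 := by
      rw [← hpow m k hm, ← Nat.cast_succ, ← hpow 2 (a + 1) two_pos]; exact hmono hupp
    have hloglow : a * log 2 ≤ k * log m := by
      rw [← log_pow, ← log_pow]; exact log_le_log (by positivity) (by exact_mod_cast hlow)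
    have hlogupp : k * log m ≤ (a + 1) * log 2 := by
      rw [← log_pow, ← Nat.cast_succ, ← log_pow]
      exact log_le_log (by positivity) (by exact_mod_cast hupp)
    rw [← abs_of_nonneg (Nat.cast_nonneg (α := ℝ) k), ← abs_mul, abs_le]
    constructor <;> nlinarith [mul_le_mul_of_nonneg_right hφlow hlog2.le,
      mul_le_mul_of_nonneg_right hφupp hlog2.le, mul_le_mul_of_nonneg_left hloglow hφ2,
      mul_le_mul_of_nonneg_left hlogupp hφ2]
  have hD : D = 0 := by
    by_contra hD
    obtain ⟨k, hk⟩ := exists_nat_gt (φ 2 * log 2 / |D|)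
    rw [div_lt_iff₀ (abs_pos.2 hD)] at hk
    linarith [hbound k]
  rw [div_mul_eq_mul_div, eq_div_iff hlog2.ne']
  linarith

structure IsEntropyCocycle (θ : ℝ → ℝ → ℝ) : Prop where
  symm : ∀ ⦃a b : ℝ⦄, 0 ≤ a → 0 ≤ b → θ a b = θ b a
  zero_right : ∀ ⦃a : ℝ⦄, 0 ≤ a → θ a 0 = 0
  mul : ∀ ⦃c a b : ℝ⦄, 0 ≤ c → 0 ≤ a → 0 ≤ b → θ (c * a) (c * b) = c * θ a b
  cocycle : ∀ ⦃a b c : ℝ⦄, 0 ≤ a → 0 ≤ b → 0 ≤ c → θ a b + θ (a + b) c = θ a (b + c) + θ b c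
  add_le : ∀ ⦃a b a' b' : ℝ⦄, 0 ≤ a → 0 ≤ b → 0 ≤ a' → 0 ≤ b' →
    θ a b + θ a' b' ≤ θ (a + a') (b + b')

-- The `θ`-entropy of `k` unit masses, merged one at a time.
noncomputable def uniformEntropy (θ : ℝ → ℝ → ℝ) (k : ℕ) : ℝ := ∑ j ∈ Finset.range k, θ j 1

namespace IsEntropyCocycle

variable {θ : ℝ → ℝ → ℝ}

lemma zero_left (hθ : IsEntropyCocycle θ) {b : ℝ} (hb : 0 ≤ b) : θ 0 b = 0 := by
  rw [hθ.symm le_rfl hb, hθ.zero_right hb]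

lemma mono_left (hθ : IsEntropyCocycle θ) {x y b : ℝ} (hx : 0 ≤ x) (hxy : x ≤ y) (hb : 0 ≤ b) :
    θ x b ≤ θ y b := by
  have := hθ.add_le hx hb (sub_nonneg.2 hxy) le_rfl
  rwa [hθ.zero_right (sub_nonneg.2 hxy), add_zero, add_sub_cancel, add_zero] at this

lemma uniformEntropy_add (hθ : IsEntropyCocycle θ) (a b : ℕ) :
    uniformEntropy θ (a + b) = uniformEntropy θ a + uniformEntropy θ b + θ a b := by
  induction b with
  | zero => simp [uniformEntropy, hθ.zero_right (Nat.cast_nonneg a)]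
  | succ b ih =>
    have := hθ.cocycle (Nat.cast_nonneg a) (Nat.cast_nonneg b) zero_le_one
    simp only [uniformEntropy, ← add_assoc, Finset.sum_range_succ] at ih ⊢
    push_cast
    linarith

lemma uniformEntropy_mul (hθ : IsEntropyCocycle θ) (m k : ℕ) :
    uniformEntropy θ (m * k) = m * uniformEntropy θ k + k * uniformEntropy θ m := by
  induction m with
  | zero => simp [uniformEntropy]
  | succ m ih =>
    have := hθ.mul (Nat.cast_nonneg k) (Nat.cast_nonneg m) zero_le_one
    rw [Nat.succ_mul, hθ.uniformEntropy_add, ih]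
    simp only [uniformEntropy, Finset.sum_range_succ] at this ⊢
    push_cast at this ⊢
    rw [mul_one, mul_comm (k : ℝ) m] at this
    rw [this]
    ring

lemma uniformEntropy_le (hθ : IsEntropyCocycle θ) (k : ℕ) : uniformEntropy θ k ≤ k * θ k 1 := by
  calc uniformEntropy θ k ≤ ∑ _j ∈ Finset.range k, θ k 1 :=
        Finset.sum_le_sum fun j hj => hθ.mono_left (Nat.cast_nonneg j)
          (Nat.cast_le.2 (Finset.mem_range.1 hj).le) zero_le_one
    _ = k * θ k 1 := by simp

lemma monotone_uniformEntropy_div (hθ : IsEntropyCocycle θ) :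
    Monotone fun k : ℕ => uniformEntropy θ k / k := by
  refine monotone_nat_of_le_succ fun k => ?_
  obtain rfl | hk := k.eq_zero_or_pos
  · simp [uniformEntropy, hθ.zero_left zero_le_one]
  · have hle := hθ.uniformEntropy_le k
    rw [div_le_div_iff₀ (by positivity) (by positivity)]
    simp only [uniformEntropy, Finset.sum_range_succ] at hle ⊢
    push_cast
    nlinarith

lemma uniformEntropy_div_mul (hθ : IsEntropyCocycle θ) {m k : ℕ} (hm : 0 < m) (hk : 0 < k) :
    uniformEntropy θ (m * k) / (m * k : ℕ) = uniformEntropy θ m / m + uniformEntropy θ k / k := by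
  rw [hθ.uniformEntropy_mul]
  push_cast
  field_simp
  ring

lemma concaveOn (hθ : IsEntropyCocycle θ) : ConcaveOn ℝ (Set.Icc 0 1) fun x => θ x (1 - x) := by
  refine ⟨convex_Icc 0 1, fun x hx y hy p q hp hq hpq => ?_⟩
  have hsplit : 1 - (p * x + q * y) = p * (1 - x) + q * (1 - y) := by linear_combination -hpq
  have hx' := sub_nonneg.2 hx.2
  have hy' := sub_nonneg.2 hy.2
  simp only [smul_eq_mul, hsplit]
  rw [← hθ.mul hp hx.1 hx', ← hθ.mul hq hy.1 hy']
  exact hθ.add_le (mul_nonneg hp hx.1) (mul_nonneg hp hx') (mul_nonneg hq hy.1) (mul_nonneg hq hy')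

lemma mul_eq_mul_pairEntropy_iff (hθ : IsEntropyCocycle θ) (A : ℝ) {c a b : ℝ} (hc : 0 < c)
    (ha : 0 ≤ a) (hb : 0 ≤ b) :
    θ (c * a) (c * b) = A * pairEntropy (c * a) (c * b) ↔ θ a b = A * pairEntropy a b := by
  rw [hθ.mul hc.le ha hb, pairEntropy_mul, mul_left_comm, mul_right_inj' hc.ne']

lemma exists_natCast_eq_mul_pairEntropy (hθ : IsEntropyCocycle θ) :
    ∃ A, 0 ≤ A ∧ ∀ a b : ℕ, θ a b = A * pairEntropy a b := by
  set A := uniformEntropy θ 2 / 2 / log 2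
  have hU1 : uniformEntropy θ 1 = 0 := by simp [uniformEntropy, hθ.zero_left zero_le_one]
  have hA : 0 ≤ A := div_nonneg (by simpa [hU1] using hθ.monotone_uniformEntropy_div one_le_two)
    (log_pos one_lt_two).le
  have hU : ∀ k : ℕ, uniformEntropy θ k = A * (k * log k) := by
    intro k
    obtain rfl | hk := k.eq_zero_or_pos
    · simp [uniformEntropy]
    have := eq_div_log_two_mul_log_of_monotone hθ.monotone_uniformEntropy_div
      (fun m k hm hk => hθ.uniformEntropy_div_mul hm hk) hk
    rw [div_eq_iff (by positivity), Nat.cast_ofNat] at this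
    rw [this]
    ring
  refine ⟨A, hA, fun a b => ?_⟩
  have := hθ.uniformEntropy_add a b
  rw [hU, hU, hU] at this
  push_cast at this
  simp only [pairEntropy, negMulLog]
  linarith

lemma eqOn_Ioo_of_natCast (hθ : IsEntropyCocycle θ) {A : ℝ}
    (hnat : ∀ a b : ℕ, θ a b = A * pairEntropy a b) :
    Set.EqOn (fun x => θ x (1 - x)) (fun x => A * pairEntropy x (1 - x)) (Set.Ioo 0 1) := by
  have hrat : ∀ q : ℚ, 0 < q → q < 1 → θ q (1 - q) = A * pairEntropy q (1 - q) := by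
    intro q hq0 hq1
    obtain ⟨a, ha⟩ := Int.eq_ofNat_of_zero_le (Rat.num_nonneg.2 hq0.le)
    have hd : (0 : ℝ) < q.den := by exact_mod_cast q.den_pos
    have hq : (q : ℝ) = a / q.den := by rw [Rat.cast_def, ha]; rfl
    have had : a ≤ q.den := by
      have : (q : ℝ) < 1 := by exact_mod_cast hq1
      rw [hq, div_lt_one hd] at this
      exact_mod_cast this.le
    have h1q : 1 - (q : ℝ) = ((q.den - a : ℕ) : ℝ) / q.den := by
      rw [Nat.cast_sub had, hq]; field_simp
    rw [h1q, hq, ← hθ.mul_eq_mul_pairEntropy_iff A hd (by positivity) (by positivity),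
      mul_div_cancel₀ _ hd.ne', mul_div_cancel₀ _ hd.ne', hnat]
  have hcont : ContinuousOn (fun x => θ x (1 - x)) (Set.Ioo 0 1) :=
    (hθ.concaveOn.subset Set.Ioo_subset_Icc_self (convex_Ioo 0 1)).continuousOn isOpen_Ioo
  have hcont' : Continuous fun x => A * pairEntropy x (1 - x) := by
    unfold pairEntropy; fun_prop
  refine Set.EqOn.of_subset_closure ?_ hcont hcont'.continuousOn Set.inter_subset_left
    (Rat.denseRange_cast.open_subset_closure_inter isOpen_Ioo)
  rintro _ ⟨⟨h0, h1⟩, q, rfl⟩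
  exact hrat q (by exact_mod_cast h0) (by exact_mod_cast h1)

lemma eq_mul_pairEntropy_of_natCast (hθ : IsEntropyCocycle θ) {A : ℝ}
    (hnat : ∀ a b : ℕ, θ a b = A * pairEntropy a b) {a b : ℝ} (ha : 0 ≤ a) (hb : 0 ≤ b) :
    θ a b = A * pairEntropy a b := by
  have hIcc : ∀ x ∈ Set.Icc (0 : ℝ) 1, θ x (1 - x) = A * pairEntropy x (1 - x) := by
    rintro x ⟨h0, h1⟩
    obtain rfl | h0 := h0.eq_or_lt
    · simp [pairEntropy, hθ.zero_left zero_le_one]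
    obtain rfl | h1 := h1.eq_or_lt
    · simp [pairEntropy, hθ.zero_right zero_le_one]
    exact hθ.eqOn_Ioo_of_natCast hnat ⟨h0, h1⟩
  obtain hs | hs := (add_nonneg ha hb).eq_or_lt
  · obtain ⟨rfl, rfl⟩ : a = 0 ∧ b = 0 := ⟨by linarith, by linarith⟩
    simp [pairEntropy, hθ.zero_right le_rfl]
  have hx : a / (a + b) ∈ Set.Icc (0 : ℝ) 1 := ⟨by positivity, (div_le_one hs).2 (by linarith)⟩
  have h1x : 1 - a / (a + b) = b / (a + b) := by field_simp; ring
  have := (hθ.mul_eq_mul_pairEntropy_iff A hs hx.1 (by positivity)).2 (h1x ▸ hIcc _ hx)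
  rwa [mul_div_cancel₀ _ hs.ne', mul_div_cancel₀ _ hs.ne'] at this

theorem exists_eq_mul_pairEntropy (hθ : IsEntropyCocycle θ) :
    ∃ A, 0 ≤ A ∧ ∀ ⦃a b : ℝ⦄, 0 ≤ a → 0 ≤ b → θ a b = A * pairEntropy a b := by
  obtain ⟨A, hA, hnat⟩ := hθ.exists_natCast_eq_mul_pairEntropy
  exact ⟨A, hA, fun a b => hθ.eq_mul_pairEntropy_of_natCast hnat⟩

end IsEntropyCocycle

section Characterization

variable {α : Type} [Fintype α] [DecidableEq α] {Xh : Type*} [Nonempty Xh] {ℓ : α → Xh → ℝ}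

lemma DataProcessing.isEntropyCocycle (hdp : DataProcessing ℓ) (hℓ : RiskBddBelow ℓ)
    {i j k : α} (hij : i ≠ j) (hik : i ≠ k) (hjk : j ≠ k) :
    IsEntropyCocycle fun a b => perfectInfoValue ℓ (Pi.single i a + Pi.single j b) where
  symm a b ha hb := by
    rw [add_comm]
    exact hdp.perfectInfoValue_pair_eq hℓ hij.symm hij hb ha
  zero_right a ha := by simpa using perfectInfoValue_single ℓ i ha
  mul c a b hc _ _ := by
    simp only [← smul_eq_mul, Pi.single_smul', ← smul_add]
    exact perfectInfoValue_smul ℓ _ hc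
  cocycle a b c ha hb hc := by
    set v : α → ℝ := Pi.single i a + Pi.single j b + Pi.single k c
    have hv : 0 ≤ v := add_nonneg (add_nonneg (Pi.single_nonneg.2 ha) (Pi.single_nonneg.2 hb))
      (Pi.single_nonneg.2 hc)
    have hvi : v i = a := by simp [v, hij, hik]
    have hvj : v j = b := by simp [v, hij.symm, hjk]
    have hvk : v k = c := by simp [v, hik.symm, hjk.symm]
    have hmij : mergeVec i j v = Pi.single i (a + b) + Pi.single k c := by
      ext x
      by_cases hxi : x = i <;> by_cases hxj : x = j <;> by_cases hxk : x = k <;>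
        simp_all [v, mergeVec]
    have hmjk : mergeVec j k v = Pi.single i a + Pi.single j (b + c) := by
      ext x
      by_cases hxi : x = i <;> by_cases hxj : x = j <;> by_cases hxk : x = k <;>
        simp_all [v, mergeVec]
    -- merge `j` into `i`, or `k` into `j`, and the result is a pair in both cases
    have h1 := hdp.perfectInfoValue_merge hℓ hij hv
    have h2 := hdp.perfectInfoValue_merge hℓ hjk hv
    rw [hmij, hvi, hvj, hdp.perfectInfoValue_pair_eq hℓ hik hij (add_nonneg ha hb) hc] at h1
    rw [hmjk, hvj, hvk, hdp.perfectInfoValue_pair_eq hℓ hjk hij hb hc] at h2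
    linarith
  add_le a b a' b' ha hb ha' hb' := by
    rw [Pi.single_add, Pi.single_add, add_add_add_comm]
    exact perfectInfoValue_add_le hℓ (add_nonneg (Pi.single_nonneg.2 ha) (Pi.single_nonneg.2 hb))
      (add_nonneg (Pi.single_nonneg.2 ha') (Pi.single_nonneg.2 hb'))

theorem DataProcessing.exists_perfectInfoValue_eq_mul_scaledEntropy (hdp : DataProcessing ℓ)
    (hℓ : RiskBddBelow ℓ) (hα : 2 < Fintype.card α) :
    ∃ A, 0 ≤ A ∧ ∀ v, 0 ≤ v → perfectInfoValue ℓ v = A * scaledEntropy v := by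
  obtain ⟨i, j, k, hij, hik, hjk⟩ := Fintype.two_lt_card_iff.1 hα
  obtain ⟨A, hA, hθ⟩ := (hdp.isEntropyCocycle hℓ hij hik hjk).exists_eq_mul_pairEntropy
  refine ⟨A, hA, fun v hv => sub_eq_zero.1 <|
    eq_zero_of_eq_mergeVec (D := fun v => perfectInfoValue ℓ v - A * scaledEntropy v) i ?_ ?_ hv⟩
  · intro v hv j' hj'
    rw [hdp.perfectInfoValue_merge hℓ hj'.symm hv, scaledEntropy_merge hj'.symm v,
      hdp.perfectInfoValue_pair_eq hℓ hj'.symm hij (hv i) (hv j'), hθ (hv i) (hv j')]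
    ring
  · intro a ha
    simp [perfectInfoValue_single ℓ i ha, scaledEntropy_single]

end Characterization

/-- Main theorem, `n ≥ 3`.  If a loss function satisfies the Data
Processing Axiom (`C(ℓ,P_TY) ≤ C(ℓ,P_XY)` for every statistically sufficient
transformation `T` of `X` for `Y`), then the benefit of side information is a
nonnegative multiple of mutual information for every joint distribution. -/
theorem DPA_implies_benefit_is_mutual_information {Xh : Type*} [Nonempty Xh]
    {n : ℕ} (hn : 3 ≤ n) (ℓ : Fin n → Xh → ℝ)
    (hfin : ∀ P : Fin n → ℝ, IsDist P →
      BddBelow (Set.range fun xh => ∑ x, P x * ℓ x xh))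
    (hdp : ∀ (Y : Type) [Fintype Y] (r : Fin n × Fin n × Y → ℝ), IsDist r →
      MarkovTXY r → MarkovXTY r → benefit ℓ (margTY r) ≤ benefit ℓ (margXY r)) :
    ∃ A : ℝ, 0 ≤ A ∧
      ∀ (Y : Type) [Fintype Y] (q : Fin n × Y → ℝ), IsDist q →
        benefit ℓ q = A * mutInfo q := by
  obtain ⟨A, hA, hK⟩ := DataProcessing.exists_perfectInfoValue_eq_mul_scaledEntropy hdp hfin
    (by rw [Fintype.card_fin]; exact hn)
  refine ⟨A, hA, fun Y _ q hq => ?_⟩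
  rw [benefit_eq_perfectInfoValue hfin hq.1, mutInfo_eq_scaledEntropy hq.2,
    hK _ (margX_nonneg hq.1), mul_sub, Finset.mul_sum]
  congr 1
  exact Finset.sum_congr rfl fun y _ => hK _ fun x => hq.1 (x, y)
end

section
/- Conservation law of directed information: for any pair of discrete random vectors (X^n, Y^n), I(X^n; Y^n) = I(X^n → Y^n) + I(Y^{n-1} → X^n), where I(X^n → Y^n) = Σ_{i=1}^n I(X^i; Y_i | Y^{i-1}) and I(Y^{n-1} → X^n) = Σ_{i=1}^n I(Y^{i-1}; X_i | X^{i-1}). -/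
open scoped BigOperators

/-- Probability that `f = u` under the mass function `p`. -/
noncomputable def pmf {Ω U : Type*} [Fintype Ω] [DecidableEq U]
    (p : Ω → ℝ) (f : Ω → U) (u : U) : ℝ :=
  ∑ ω ∈ Finset.univ.filter fun ω => f ω = u, p ω

/-- Conditional mutual information `I(f ; g | h)` (natural logarithm) of the random
variables `f, g, h` on a finite space with mass function `p`. -/
noncomputable def condMI {Ω U V W : Type*} [Fintype Ω] [Fintype U] [Fintype V] [Fintype W]
    [DecidableEq U] [DecidableEq V] [DecidableEq W]
    (p : Ω → ℝ) (f : Ω → U) (g : Ω → V) (h : Ω → W) : ℝ :=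
  ∑ u, ∑ v, ∑ w,
    pmf p (fun ω => (f ω, g ω, h ω)) (u, v, w) *
      Real.log ((pmf p (fun ω => (f ω, g ω, h ω)) (u, v, w) * pmf p h w) /
        (pmf p (fun ω => (f ω, h ω)) (u, w) * pmf p (fun ω => (g ω, h ω)) (v, w)))

/-- Conditional entropy `H(g | h)` (natural logarithm). -/
noncomputable def condEnt {Ω V W : Type*} [Fintype Ω] [Fintype V] [Fintype W]
    [DecidableEq V] [DecidableEq W] (p : Ω → ℝ) (g : Ω → V) (h : Ω → W) : ℝ :=
  -∑ v, ∑ w, pmf p (fun ω => (g ω, h ω)) (v, w) *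
      Real.log (pmf p (fun ω => (g ω, h ω)) (v, w) / pmf p h w)

variable {A B : Type*} [Fintype A] [Fintype B] [DecidableEq A] [DecidableEq B] {n : ℕ}

/-- The prefix `X^i = (X_1,…,X_i)` of the first component. -/
def prefX {m : ℕ} (hm : m ≤ n) (ω : (Fin n → A) × (Fin n → B)) : Fin m → A :=
  fun j => ω.1 (Fin.castLE hm j)

/-- The prefix `Y^i = (Y_1,…,Y_i)` of the second component. -/
def prefY {m : ℕ} (hm : m ≤ n) (ω : (Fin n → A) × (Fin n → B)) : Fin m → B :=
  fun j => ω.2 (Fin.castLE hm j)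

lemma sum_pmf_mul {Ω U : Type*} [Fintype Ω] [Fintype U] [DecidableEq U]
    (p : Ω → ℝ) (F : Ω → U) (φ : U → ℝ) :
    ∑ u, pmf p F u * φ u = ∑ ω, p ω * φ (F ω) := by
  unfold pmf
  rw [← Finset.sum_fiberwise (s := Finset.univ) (g := F) (f := fun ω => p ω * φ (F ω))]
  refine Finset.sum_congr rfl fun u _ => ?_
  rw [Finset.sum_mul]
  refine Finset.sum_congr rfl fun ω hω => ?_
  simp only [Finset.mem_filter] at hω
  rw [hω.2]

lemma condMI_eq_sum {Ω U V W : Type*} [Fintype Ω] [Fintype U] [Fintype V] [Fintype W]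
    [DecidableEq U] [DecidableEq V] [DecidableEq W]
    (p : Ω → ℝ) (f : Ω → U) (g : Ω → V) (h : Ω → W) :
    condMI p f g h = ∑ ω, p ω *
      Real.log ((pmf p (fun ω' => (f ω', g ω', h ω')) (f ω, g ω, h ω) * pmf p h (h ω)) /
        (pmf p (fun ω' => (f ω', h ω')) (f ω, h ω) * pmf p (fun ω' => (g ω', h ω')) (g ω, h ω))) := by
  rw [← sum_pmf_mul p (fun ω => (f ω, g ω, h ω))
      (φ := fun x => Real.log ((pmf p (fun ω' => (f ω', g ω', h ω')) x * pmf p h x.2.2) /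
        (pmf p (fun ω' => (f ω', h ω')) (x.1, x.2.2) * pmf p (fun ω' => (g ω', h ω')) (x.2.1, x.2.2))))]
  rw [condMI, Fintype.sum_prod_type]
  refine Finset.sum_congr rfl fun u _ => ?_
  rw [Fintype.sum_prod_type]

lemma telescope {n : ℕ} (F : ℕ → ℝ) : ∑ i : Fin n, (F (↑i + 1) - F ↑i) = F n - F 0 := by
  rw [Fin.sum_univ_eq_sum_range (fun k => F (k + 1) - F k) n, Finset.sum_range_sub]

lemma log_frac {a b c d : ℝ} (ha : 0 < a) (hb : 0 < b) (hc : 0 < c) (hd : 0 < d) :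
    Real.log ((a * b) / (c * d)) =
      Real.log a + Real.log b - Real.log c - Real.log d := by
  rw [Real.log_div (by positivity) (by positivity), Real.log_mul ha.ne' hb.ne',
    Real.log_mul hc.ne' hd.ne']
  ring

noncomputable def Qf (p : (Fin n → A) × (Fin n → B) → ℝ)
    (ω₀ : (Fin n → A) × (Fin n → B)) (a b : ℕ) : ℝ :=
  ∑ ω ∈ Finset.univ.filter (fun ω => (∀ j : Fin n, (j : ℕ) < a → ω.1 j = ω₀.1 j) ∧
      (∀ j : Fin n, (j : ℕ) < b → ω.2 j = ω₀.2 j)), p ω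

lemma Qf_pos {p : (Fin n → A) × (Fin n → B) → ℝ} {ω₀ : (Fin n → A) × (Fin n → B)}
    (hp0 : ∀ ω, 0 ≤ p ω) (hω₀ : 0 < p ω₀) (a b : ℕ) : 0 < Qf p ω₀ a b := by
  refine lt_of_lt_of_le hω₀ (Finset.single_le_sum (f := p) (fun ω _ => hp0 ω) ?_)
  simp

lemma Qf_zero_zero {p : (Fin n → A) × (Fin n → B) → ℝ} (hp : ∑ ω, p ω = 1)
    (ω₀ : (Fin n → A) × (Fin n → B)) : Qf p ω₀ 0 0 = 1 := by
  rw [Qf, Finset.filter_true_of_mem (by simp), hp]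

lemma pmf_eq_Qf {U : Type*} [DecidableEq U] (p : (Fin n → A) × (Fin n → B) → ℝ)
    (ω₀ : (Fin n → A) × (Fin n → B)) (F : (Fin n → A) × (Fin n → B) → U) (a b : ℕ)
    (hF : ∀ ω, F ω = F ω₀ ↔ ((∀ j : Fin n, (j : ℕ) < a → ω.1 j = ω₀.1 j) ∧
      (∀ j : Fin n, (j : ℕ) < b → ω.2 j = ω₀.2 j))) :
    pmf p F (F ω₀) = Qf p ω₀ a b := by
  unfold pmf Qf
  congr 1
  ext ω
  simp [hF]

lemma prefX_eq_iff {m : ℕ} (hm : m ≤ n) (ω ω₀ : (Fin n → A) × (Fin n → B)) :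
    prefX hm ω = prefX hm ω₀ ↔ ∀ j : Fin n, (j : ℕ) < m → ω.1 j = ω₀.1 j := by
  constructor
  · intro h j hj
    have := congrFun h ⟨j, hj⟩
    simpa [prefX, Fin.castLE] using this
  · intro h
    funext j
    exact h (Fin.castLE hm j) (by simpa using j.isLt)

lemma prefY_eq_iff {m : ℕ} (hm : m ≤ n) (ω ω₀ : (Fin n → A) × (Fin n → B)) :
    prefY hm ω = prefY hm ω₀ ↔ ∀ j : Fin n, (j : ℕ) < m → ω.2 j = ω₀.2 j := by
  constructor
  · intro h j hj
    have := congrFun h ⟨j, hj⟩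
    simpa [prefY, Fin.castLE] using this
  · intro h
    funext j
    exact h (Fin.castLE hm j) (by simpa using j.isLt)

lemma coord_pref_iff {C : Type*} (f g : Fin n → C) (i : Fin n) :
    (f i = g i ∧ ∀ j : Fin n, (j : ℕ) < (i : ℕ) → f j = g j) ↔
      ∀ j : Fin n, (j : ℕ) < (i : ℕ) + 1 → f j = g j := by
  constructor
  · rintro ⟨h1, h2⟩ j hj
    rcases Nat.lt_succ_iff_lt_or_eq.mp hj with h | h
    · exact h2 j h
    · rw [show j = i from Fin.ext h]; exact h1
  · intro h
    exact ⟨h i (Nat.lt_succ_self _), fun j hj => h j (Nat.lt_succ_of_lt hj)⟩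

lemma dir_term (p : (Fin n → A) × (Fin n → B) → ℝ) (hp0 : ∀ ω, 0 ≤ p ω)
    (ω : (Fin n → A) × (Fin n → B)) (hpω : 0 < p ω) (i : Fin n) :
    Real.log ((pmf p (fun ω' => (prefX i.isLt ω', ω'.2 i, prefY i.isLt.le ω'))
          (prefX i.isLt ω, ω.2 i, prefY i.isLt.le ω) *
        pmf p (prefY i.isLt.le) (prefY i.isLt.le ω)) /
      (pmf p (fun ω' => (prefX i.isLt ω', prefY i.isLt.le ω'))
          (prefX i.isLt ω, prefY i.isLt.le ω) *
        pmf p (fun ω' => (ω'.2 i, prefY i.isLt.le ω')) (ω.2 i, prefY i.isLt.le ω))) =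
    Real.log (Qf p ω (↑i + 1) (↑i + 1)) + Real.log (Qf p ω 0 ↑i)
      - Real.log (Qf p ω (↑i + 1) ↑i) - Real.log (Qf p ω 0 (↑i + 1)) := by
  rw [pmf_eq_Qf p ω (fun ω' => (prefX i.isLt ω', ω'.2 i, prefY i.isLt.le ω')) (↑i + 1) (↑i + 1)
      (by intro ω'; simp only [Prod.mk.injEq, prefX_eq_iff, prefY_eq_iff, ← coord_pref_iff]),
    pmf_eq_Qf p ω (prefY i.isLt.le) 0 ↑i
      (by intro ω'; simp only [prefY_eq_iff]; simp),
    pmf_eq_Qf p ω (fun ω' => (prefX i.isLt ω', prefY i.isLt.le ω')) (↑i + 1) ↑i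
      (by intro ω'; simp only [Prod.mk.injEq, prefX_eq_iff, prefY_eq_iff]),
    pmf_eq_Qf p ω (fun ω' => (ω'.2 i, prefY i.isLt.le ω')) 0 (↑i + 1)
      (by intro ω'; simp only [Prod.mk.injEq, prefY_eq_iff, ← coord_pref_iff]; simp)]
  exact log_frac (Qf_pos hp0 hpω _ _) (Qf_pos hp0 hpω _ _) (Qf_pos hp0 hpω _ _)
    (Qf_pos hp0 hpω _ _)

lemma rev_term (p : (Fin n → A) × (Fin n → B) → ℝ) (hp0 : ∀ ω, 0 ≤ p ω)
    (ω : (Fin n → A) × (Fin n → B)) (hpω : 0 < p ω) (i : Fin n) :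
    Real.log ((pmf p (fun ω' => (prefY i.isLt.le ω', ω'.1 i, prefX i.isLt.le ω'))
          (prefY i.isLt.le ω, ω.1 i, prefX i.isLt.le ω) *
        pmf p (prefX i.isLt.le) (prefX i.isLt.le ω)) /
      (pmf p (fun ω' => (prefY i.isLt.le ω', prefX i.isLt.le ω'))
          (prefY i.isLt.le ω, prefX i.isLt.le ω) *
        pmf p (fun ω' => (ω'.1 i, prefX i.isLt.le ω')) (ω.1 i, prefX i.isLt.le ω))) =
    Real.log (Qf p ω (↑i + 1) ↑i) + Real.log (Qf p ω ↑i 0)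
      - Real.log (Qf p ω ↑i ↑i) - Real.log (Qf p ω (↑i + 1) 0) := by
  rw [pmf_eq_Qf p ω (fun ω' => (prefY i.isLt.le ω', ω'.1 i, prefX i.isLt.le ω')) (↑i + 1) ↑i
      (by intro ω'; simp only [Prod.mk.injEq, prefX_eq_iff, prefY_eq_iff, ← coord_pref_iff]; tauto),
    pmf_eq_Qf p ω (prefX i.isLt.le) ↑i 0
      (by intro ω'; simp only [prefX_eq_iff]; simp),
    pmf_eq_Qf p ω (fun ω' => (prefY i.isLt.le ω', prefX i.isLt.le ω')) ↑i ↑i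
      (by intro ω'; simp only [Prod.mk.injEq, prefX_eq_iff, prefY_eq_iff]; tauto),
    pmf_eq_Qf p ω (fun ω' => (ω'.1 i, prefX i.isLt.le ω')) (↑i + 1) 0
      (by intro ω'; simp only [Prod.mk.injEq, prefX_eq_iff, ← coord_pref_iff]; simp)]
  exact log_frac (Qf_pos hp0 hpω _ _) (Qf_pos hp0 hpω _ _) (Qf_pos hp0 hpω _ _)
    (Qf_pos hp0 hpω _ _)

lemma combine {n : ℕ} (L : ℕ → ℕ → ℝ) :
    ∑ i : Fin n, ((L (↑i + 1) (↑i + 1) + L 0 ↑i - L (↑i + 1) ↑i - L 0 (↑i + 1))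
        + (L (↑i + 1) ↑i + L ↑i 0 - L ↑i ↑i - L (↑i + 1) 0))
      = (L n n - L 0 0) - (L 0 n - L 0 0) - (L n 0 - L 0 0) := by
  rw [Fin.sum_univ_eq_sum_range (fun k => (L (k + 1) (k + 1) + L 0 k - L (k + 1) k - L 0 (k + 1))
        + (L (k + 1) k + L k 0 - L k k - L (k + 1) 0)) n]
  induction n with
  | zero => simp
  | succ m ih => rw [Finset.sum_range_succ, ih]; ring

lemma lhs_term (p : (Fin n → A) × (Fin n → B) → ℝ) (hp0 : ∀ ω, 0 ≤ p ω)
    (ω : (Fin n → A) × (Fin n → B)) (hpω : 0 < p ω) :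
    Real.log ((pmf p (fun ω' => (ω'.1, ω'.2, ())) (ω.1, ω.2, ()) * pmf p (fun _ => ()) ()) /
      (pmf p (fun ω' => (ω'.1, ())) (ω.1, ()) * pmf p (fun ω' => (ω'.2, ())) (ω.2, ()))) =
    Real.log (Qf p ω n n) + Real.log (Qf p ω 0 0)
      - Real.log (Qf p ω n 0) - Real.log (Qf p ω 0 n) := by
  rw [pmf_eq_Qf p ω (fun ω' => (ω'.1, ω'.2, ())) n n (by
      intro ω'
      simp only [Prod.mk.injEq, and_true]
      constructor
      · rintro ⟨h1, h2⟩
        exact ⟨fun j _ => congrFun h1 j, fun j _ => congrFun h2 j⟩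
      · rintro ⟨h1, h2⟩
        exact ⟨funext fun j => h1 j j.isLt, funext fun j => h2 j j.isLt⟩),
    pmf_eq_Qf p ω (fun _ => ()) 0 0 (by simp),
    pmf_eq_Qf p ω (fun ω' => (ω'.1, ())) n 0 (by
      intro ω'
      simp only [Prod.mk.injEq, and_true]
      constructor
      · intro h1
        exact ⟨fun j _ => congrFun h1 j, by simp⟩
      · rintro ⟨h1, -⟩
        exact funext fun j => h1 j j.isLt),
    pmf_eq_Qf p ω (fun ω' => (ω'.2, ())) 0 n (by
      intro ω'
      simp only [Prod.mk.injEq, and_true]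
      constructor
      · intro h1
        exact ⟨by simp, fun j _ => congrFun h1 j⟩
      · rintro ⟨-, h1⟩
        exact funext fun j => h1 j j.isLt)]
  exact log_frac (Qf_pos hp0 hpω _ _) (Qf_pos hp0 hpω _ _) (Qf_pos hp0 hpω _ _)
    (Qf_pos hp0 hpω _ _)

/-- Directed information `I(X^n → Y^n) = Σ_i I(X^i ; Y_i | Y^{i-1})`. -/
noncomputable def dirInfo (p : (Fin n → A) × (Fin n → B) → ℝ) : ℝ :=
  ∑ i : Fin n, condMI p (prefX i.isLt) (fun ω => ω.2 i) (prefY i.isLt.le)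

/-- Reverse directed information `I(Y^{n-1} → X^n) = Σ_i I(Y^{i-1} ; X_i | X^{i-1})`. -/
noncomputable def revDirInfo (p : (Fin n → A) × (Fin n → B) → ℝ) : ℝ :=
  ∑ i : Fin n, condMI p (prefY i.isLt.le) (fun ω => ω.1 i) (prefX i.isLt.le)

/-- Conservation law of directed information:
`I(X^n; Y^n) = I(X^n → Y^n) + I(Y^{n-1} → X^n)`. -/
theorem conservation_law_of_directed_information
    (p : (Fin n → A) × (Fin n → B) → ℝ) (hp : IsDist p) :
    condMI p (fun ω => ω.1) (fun ω => ω.2) (fun _ => (() : Unit))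
      = dirInfo p + revDirInfo p := by
  obtain ⟨hp0, hp1⟩ := hp
  rw [dirInfo, revDirInfo]
  simp only [condMI_eq_sum]
  simp only [Finset.sum_comm (s := (Finset.univ : Finset (Fin n)))
    (t := (Finset.univ : Finset ((Fin n → A) × (Fin n → B))))]
  rw [← Finset.sum_add_distrib]
  refine Finset.sum_congr rfl fun ω _ => ?_
  rcases eq_or_lt_of_le (hp0 ω) with h0 | hpω
  · rw [← h0]; simp
  simp only [← mul_add, ← Finset.mul_sum]
  congr 1
  rw [lhs_term p hp0 ω hpω, ← Finset.sum_add_distrib,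
    Finset.sum_congr rfl (fun i _ => congrArg₂ (· + ·) (dir_term p hp0 ω hpω i)
      (rev_term p hp0 ω hpω i)),
    combine (fun a b => Real.log (Qf p ω a b))]
  ring
end
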